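/- arXiv:1707.04726 — 12 statements merged into one kernel-verified Lean document; each statement's English description precedes it below -/
import Mathlib

section
/- Let v and w be weights. There exists a continuous linear operator T : ℓ¹ → ℓ¹ satisfying (T x)(n) = (w(n)/n) · ∑_{k=1}^{n} x(k)/v(k) for every x ∈ ℓ¹ and every n ≥ 1 (equivalently, the Cesàro operator (𝒞x)_n = (1/n)∑_{k=1}^n x_k maps ℓ¹(v) continuously into ℓ¹(w)) if and only if M_{v,w} := sup_{n≥1} (1/v(n)) ∑_{m=n}^∞ w(m)/m < ∞. Moreover, in that case the operator norm of any such T equals M_{v,w}. -/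
/- STATEMENT 0: The Cesàro operator maps ℓ¹(v) continuously into ℓ¹(w) (equivalently, the
transferred operator T exists on ℓ¹) iff M_{v,w} := sup_n (1/v(n)) ∑_{m=n}^∞ w(m)/m < ∞,
and in that case ‖T‖ = M_{v,w}.  Sequences are indexed by `ℕ`, with index `n : ℕ`
corresponding to the paper's index `n+1`. -/

open Filter Topology

noncomputable section

/-- `ℓ¹`, the space of absolutely summable complex sequences. -/
abbrev ellOne : Type := lp (fun _ : ℕ => ℂ) 1

/-- `T` realizes the Cesàro operator from `ℓ¹(v)` to `ℓ¹(w)` in the coordinates of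
`Φ_v`, `Φ_w`:  `(T x)(n) = (w(n)/n) ∑_{k=1}^n x(k)/v(k)` (paper indexing). -/
def IsCesaroOp (v w : ℕ → ℝ) (T : ellOne →L[ℂ] ellOne) : Prop :=
  ∀ (x : ellOne) (n : ℕ),
    (T x : ∀ _ : ℕ, ℂ) n
      = ((w n / (n + 1) : ℝ) : ℂ) * ∑ k ∈ Finset.range (n + 1), (x : ∀ _ : ℕ, ℂ) k / ((v k : ℝ) : ℂ)

/-- `M_{v,w} = sup_n (1/v(n)) ∑_{m=n}^∞ w(m)/m`, computed in `ℝ≥0∞` (paper indexing: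
index `n : ℕ` is the paper's `n+1`). -/
def Mvw (v w : ℕ → ℝ) : ENNReal :=
  ⨆ n : ℕ, ENNReal.ofReal (1 / v n) * ∑' k : ℕ, ENNReal.ofReal (w (n + k) / (n + k + 1))

/-! In the coordinates of `ℓ¹` the operator is the lower-triangular matrix
`a n k = w(n) / ((n+1) v(k))`, `k ≤ n`. An infinite matrix acts boundedly on `ℓ¹` exactly when its
columns are uniformly bounded in `ℓ¹`, and the operator norm is then the supremum of the column
norms: the upper bound is Tonelli (swap the two sums), the lower bound comes from the unit vectors
`e_k`, whose images are the columns. The `k`-th column norm of the Cesàro matrix is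
`(1/v(k)) ∑_{n ≥ k} w(n)/(n+1)`, so this supremum is `M_{v,w}`. All sums are taken in `ℝ≥0∞`,
which removes every summability side condition from the estimates. -/

open scoped ENNReal

theorem lp.enorm_eq_tsum_enorm_of_one {α : Type*} {E : α → Type*}
    [∀ i, NormedAddCommGroup (E i)] (f : lp E 1) : ‖f‖ₑ = ∑' i, ‖f i‖ₑ := by
  have hsum : Summable fun i => ‖f i‖ := by simpa using (lp.memℓp f).summable (p := 1) (by norm_num)
  rw [← ofReal_norm, lp.norm_eq_tsum_rpow (by norm_num)]
  simp only [ENNReal.toReal_one, Real.rpow_one, ne_eq, one_ne_zero, not_false_eq_true, div_self]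
  rw [ENNReal.ofReal_tsum_of_nonneg (fun _ => norm_nonneg _) hsum]
  simp [ofReal_norm]

theorem memℓp_one_of_tsum_enorm_ne_top {α : Type*} {E : α → Type*}
    [∀ i, NormedAddCommGroup (E i)] {f : ∀ i, E i} (hf : ∑' i, ‖f i‖ₑ ≠ ⊤) : Memℓp f 1 :=
  memℓp_gen (by simpa using NNReal.summable_coe.2 (ENNReal.tsum_coe_ne_top_iff_summable.1 hf))

theorem ENNReal.tsum_ite_le_eq_tsum_add (f : ℕ → ℝ≥0∞) (k : ℕ) :
    ∑' n, (if k ≤ n then f n else 0) = ∑' j, f (j + k) := by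
  rw [← ENNReal.summable.sum_add_tsum_nat_add' (k := k),
    Finset.sum_eq_zero fun n hn => if_neg (by simpa using hn), zero_add]
  exact tsum_congr fun j => if_pos (Nat.le_add_left k j)

section MatrixOp

variable {𝕜 ι κ : Type*} [NontriviallyNormedField 𝕜]

def supColSum (a : ι → κ → 𝕜) : ℝ≥0∞ := ⨆ k, ∑' i, ‖a i k‖ₑ

def IsMatrixOp (a : ι → κ → 𝕜) (T : lp (fun _ : κ => 𝕜) 1 →L[𝕜] lp (fun _ : ι => 𝕜) 1) :
    Prop :=
  ∀ x i, T x i = ∑' k, a i k * x k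

theorem enorm_le_supColSum (a : ι → κ → 𝕜) (i : ι) (k : κ) : ‖a i k‖ₑ ≤ supColSum a :=
  (ENNReal.le_tsum i).trans (le_iSup (fun k => ∑' i, ‖a i k‖ₑ) k)

theorem tsum_enorm_tsum_mul_le (a : ι → κ → 𝕜) (x : κ → 𝕜) :
    ∑' i, ‖∑' k, a i k * x k‖ₑ ≤ supColSum a * ∑' k, ‖x k‖ₑ :=
  calc ∑' i, ‖∑' k, a i k * x k‖ₑ
      ≤ ∑' i, ∑' k, ‖a i k‖ₑ * ‖x k‖ₑ :=
        ENNReal.tsum_le_tsum fun i => enorm_tsum_le_tsum_enorm.trans_eq (by simp only [enorm_mul])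
    _ = ∑' k, (∑' i, ‖a i k‖ₑ) * ‖x k‖ₑ := by
        rw [ENNReal.tsum_comm]; simp only [ENNReal.tsum_mul_right]
    _ ≤ ∑' k, supColSum a * ‖x k‖ₑ :=
        ENNReal.tsum_le_tsum fun k => by gcongr; exact le_iSup (fun k => ∑' i, ‖a i k‖ₑ) k
    _ = supColSum a * ∑' k, ‖x k‖ₑ := ENNReal.tsum_mul_left

theorem summable_mul_of_supColSum_ne_top [CompleteSpace 𝕜] {a : ι → κ → 𝕜}
    (h : supColSum a ≠ ⊤) (x : lp (fun _ : κ => 𝕜) 1) (i : ι) :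
    Summable fun k => a i k * x k := by
  refine Summable.of_norm (tsum_enorm_ne_top_iff_summable_norm.1 (ne_top_of_le_ne_top
    (ENNReal.mul_ne_top h (lp.enorm_eq_tsum_enorm_of_one x ▸ enorm_ne_top)) ?_))
  calc ∑' k, ‖a i k * x k‖ₑ = ∑' k, ‖a i k‖ₑ * ‖x k‖ₑ := by simp only [enorm_mul]
    _ ≤ ∑' k, supColSum a * ‖x k‖ₑ :=
        ENNReal.tsum_le_tsum fun k => by gcongr; exact enorm_le_supColSum a i k
    _ = supColSum a * ∑' k, ‖x k‖ₑ := ENNReal.tsum_mul_left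

theorem exists_isMatrixOp [CompleteSpace 𝕜] {a : ι → κ → 𝕜} (h : supColSum a ≠ ⊤) :
    ∃ T, IsMatrixOp a T := by
  have hbound (x : lp (fun _ : κ => 𝕜) 1) :
      ∑' i, ‖∑' k, a i k * x k‖ₑ ≤ supColSum a * ‖x‖ₑ :=
    lp.enorm_eq_tsum_enorm_of_one x ▸ tsum_enorm_tsum_mul_le a x
  let L : lp (fun _ : κ => 𝕜) 1 →ₗ[𝕜] lp (fun _ : ι => 𝕜) 1 :=
    { toFun x := ⟨fun i => ∑' k, a i k * x k, memℓp_one_of_tsum_enorm_ne_top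
        (ne_top_of_le_ne_top (ENNReal.mul_ne_top h enorm_ne_top) (hbound x))⟩
      map_add' x y := by
        ext i
        simp only [lp.coeFn_add, Pi.add_apply, mul_add]
        exact (summable_mul_of_supColSum_ne_top h x i).tsum_add
          (summable_mul_of_supColSum_ne_top h y i)
      map_smul' c x := by
        ext i
        simp only [lp.coeFn_smul, Pi.smul_apply, smul_eq_mul, RingHom.id_apply, mul_left_comm _ c,
          tsum_mul_left] }
  refine ⟨L.mkContinuous (supColSum a).toReal fun x => ?_, fun x i => rfl⟩
  rw [← toReal_enorm, ← toReal_enorm x, ← ENNReal.toReal_mul]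
  refine ENNReal.toReal_mono (ENNReal.mul_ne_top h enorm_ne_top) ?_
  rw [lp.enorm_eq_tsum_enorm_of_one]
  exact hbound x

namespace IsMatrixOp

variable {a : ι → κ → 𝕜} {T : lp (fun _ : κ => 𝕜) 1 →L[𝕜] lp (fun _ : ι => 𝕜) 1}

theorem supColSum_le_opENorm (hT : IsMatrixOp a T) : supColSum a ≤ ‖T‖ₑ := by
  classical
  refine iSup_le fun k => ?_
  have hcol : ∀ i, T (lp.single 1 k 1) i = a i k := fun i => by
    rw [hT, tsum_eq_single k fun j hj => by simp [Pi.single_eq_of_ne hj]]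
    simp
  calc ∑' i, ‖a i k‖ₑ = ‖T (lp.single 1 k 1)‖ₑ := by
        simp only [lp.enorm_eq_tsum_enorm_of_one, hcol]
    _ ≤ ‖T‖ₑ * ‖(lp.single 1 k 1 : lp (fun _ : κ => 𝕜) 1)‖ₑ := T.le_opENorm _
    _ = ‖T‖ₑ := by rw [← ofReal_norm (lp.single _ _ _), lp.norm_single (by norm_num)]; simp

theorem opENorm_eq (hT : IsMatrixOp a T) : ‖T‖ₑ = supColSum a := by
  refine le_antisymm (T.opENorm_le_bound fun x => ?_) hT.supColSum_le_opENorm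
  rw [lp.enorm_eq_tsum_enorm_of_one, lp.enorm_eq_tsum_enorm_of_one]
  simpa only [hT x] using tsum_enorm_tsum_mul_le a x

end IsMatrixOp

end MatrixOp

def cesaroMatrix (v w : ℕ → ℝ) (n k : ℕ) : ℂ :=
  if k ≤ n then ((w n / (n + 1) : ℝ) : ℂ) / ((v k : ℝ) : ℂ) else 0

section Cesaro

variable {v w : ℕ → ℝ}

theorem isCesaroOp_iff_isMatrixOp {T : ellOne →L[ℂ] ellOne} :
    IsCesaroOp v w T ↔ IsMatrixOp (cesaroMatrix v w) T := by
  have hrow (x : ellOne) (n : ℕ) : ∑' k, cesaroMatrix v w n k * x k =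
      ((w n / (n + 1) : ℝ) : ℂ) * ∑ k ∈ Finset.range (n + 1), x k / ((v k : ℝ) : ℂ) := by
    rw [tsum_eq_sum (s := Finset.range (n + 1)) fun k hk => by
      simp [cesaroMatrix, Nat.lt_succ_iff.not.1 (Finset.mem_range.not.1 hk)], Finset.mul_sum]
    refine Finset.sum_congr rfl fun k hk => ?_
    rw [cesaroMatrix, if_pos (Nat.lt_succ_iff.1 (Finset.mem_range.1 hk))]
    ring
  simp only [IsCesaroOp, IsMatrixOp, hrow]

theorem supColSum_cesaroMatrix (hv : ∀ n, 0 < v n) (hw : ∀ n, 0 < w n) :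
    supColSum (cesaroMatrix v w) = Mvw v w := by
  refine iSup_congr fun k => ?_
  have hentry (n : ℕ) : ‖cesaroMatrix v w n k‖ₑ =
      if k ≤ n then ENNReal.ofReal (w n / (n + 1)) * ENNReal.ofReal (1 / v k) else 0 := by
    have := hw n
    have := hv k
    unfold cesaroMatrix
    split_ifs
    · rw [← Complex.ofReal_div, ← ofReal_norm, Complex.norm_real, Real.norm_of_nonneg
        (by positivity), div_eq_mul_one_div (w n / _), ENNReal.ofReal_mul (by positivity)]
    · exact enorm_zero
  rw [tsum_congr hentry, ENNReal.tsum_ite_le_eq_tsum_add, ENNReal.tsum_mul_right, mul_comm]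
  congr 2 with j
  push_cast
  ring_nf

end Cesaro

theorem cesaro_continuous_iff_general (v w : ℕ → ℝ)
    (hv : ∀ n, 0 < v n) (hw : ∀ n, 0 < w n) :
    ((∃ T : ellOne →L[ℂ] ellOne, IsCesaroOp v w T) ↔ Mvw v w ≠ ⊤) ∧
      ∀ T : ellOne →L[ℂ] ellOne, IsCesaroOp v w T → ‖T‖ = (Mvw v w).toReal := by
  simp only [isCesaroOp_iff_isMatrixOp, ← supColSum_cesaroMatrix hv hw]
  refine ⟨⟨fun ⟨T, hT⟩ => hT.opENorm_eq ▸ enorm_ne_top, exists_isMatrixOp⟩, fun T hT => ?_⟩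
  rw [← hT.opENorm_eq, toReal_enorm]

theorem cesaro_continuous_iff (v w : ℕ → ℝ)
    (hv : ∀ n, 0 < v n) (hvb : ∃ C, ∀ n, v n ≤ C)
    (hw : ∀ n, 0 < w n) (hwb : ∃ C, ∀ n, w n ≤ C) :
    ((∃ T : ellOne →L[ℂ] ellOne, IsCesaroOp v w T) ↔ Mvw v w ≠ ⊤) ∧
      ∀ T : ellOne →L[ℂ] ellOne, IsCesaroOp v w T → ‖T‖ = (Mvw v w).toReal :=
  cesaro_continuous_iff_general v w hv hw
end
end

section
/- Let v and w be weights with M_{v,w} := sup_{n≥1} (1/v(n)) ∑_{m=n}^∞ w(m)/m < ∞, and let T : ℓ¹ → ℓ¹ be the continuous linear operator satisfying (T x)(n) = (w(n)/n) · ∑_{k=1}^{n} x(k)/v(k) for all x ∈ ℓ¹ and n ≥ 1. Then T is a compact operator if and only if (1/v(n)) ∑_{m=n}^∞ w(m)/m → 0 as n → ∞. -/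
/- Index `n : ℕ` corresponds to the paper's `n+1`. -/

open Filter Topology

noncomputable section

/-!
The `n`-th column `T eₙ` of `T` has entries `(1 / v n) * (w m / (m + 1))` for `m ≥ n` and `0` for
`m < n`, so its ℓ¹-norm is exactly the quantity in the statement: `T` is compact iff its columns
tend to `0`. If they do, `T` is the norm limit of its finite-rank truncations
`x ↦ ∑_{k<N} x k • T eₖ`, because on ℓ¹ the norm of the difference is at most `sup_{k ≥ N} ‖T eₖ‖`.
Conversely, the columns of a compact `T` lie in a compact set and tend to `0` coordinatewise, as
`T eₙ` vanishes below `n`; on a compact subset of `ℓᵖ` coordinatewise convergence is norm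
convergence.
-/

namespace lp

variable {α : Type*} {E : α → Type*} [∀ i, NormedAddCommGroup (E i)]

theorem enorm_eq_tsum_enorm (f : lp E 1) : ‖f‖ₑ = ∑' i, ‖f i‖ₑ := by
  have hf := lp.hasSum_norm (p := 1) (by norm_num) f
  simp only [ENNReal.toReal_one, Real.rpow_one] at hf
  simp_rw [← ofReal_norm, ← hf.tsum_eq]
  exact ENNReal.ofReal_tsum_of_nonneg (fun _ => norm_nonneg _) hf.summable

theorem tendsto_of_isCompact_of_tendsto_apply {p : ENNReal} [Fact (1 ≤ p)] {ι : Type*}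
    {l : Filter ι} {K : Set (lp E p)} (hK : IsCompact K) {x : ι → lp E p} (hxK : ∀ n, x n ∈ K)
    {y : lp E p} (hx : ∀ i, Tendsto (fun n => x n i) l (𝓝 (y i))) : Tendsto x l (𝓝 y) := by
  refine hK.tendsto_nhds_of_unique_mapClusterPt (Eventually.of_forall hxK) fun z _ hz => ?_
  ext i
  have hzi : MapClusterPt (z i) l (fun n => x n i) :=
    hz.tendsto_comp ((lp.lipschitzWith_one_eval p i).continuous.tendsto z)
  exact eq_of_nhds_neBot (ClusterPt.mono hzi (hx i))

end lp

theorem IsCompactOperator.tendsto_of_tendsto_apply {𝕜 X ι : Type*} [NontriviallyNormedField 𝕜]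
    [SeminormedAddCommGroup X] [NormedSpace 𝕜 X] {α : Type*} {E : α → Type*}
    [∀ i, NormedAddCommGroup (E i)] [∀ i, NormedSpace 𝕜 (E i)] {p : ENNReal} [Fact (1 ≤ p)]
    {T : X →L[𝕜] lp E p} (hT : IsCompactOperator T) {l : Filter ι} {x : ι → X}
    (hx : Bornology.IsBounded (Set.range x)) {y : lp E p}
    (h : ∀ i, Tendsto (fun n => T (x n) i) l (𝓝 (y i))) : Tendsto (fun n => T (x n)) l (𝓝 y) := by
  obtain ⟨K, hK, hTK⟩ := hT.image_subset_compact_of_bounded hx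
  exact lp.tendsto_of_isCompact_of_tendsto_apply hK
    (fun n => hTK ⟨x n, Set.mem_range_self n, rfl⟩) h

section ellOneDomain

variable {𝕜 F : Type*} [RCLike 𝕜] [NormedAddCommGroup F] [NormedSpace 𝕜 F]

theorem hasSum_smul_apply_single {α : Type*} [DecidableEq α] {p : ENNReal} [Fact (1 ≤ p)]
    (hp : p ≠ ⊤)
    (T : lp (fun _ : α => 𝕜) p →L[𝕜] F) (x : lp (fun _ : α => 𝕜) p) :
    HasSum (fun k => x k • T (lp.single p k 1)) (T x) := by
  have hx := (lp.hasSum_single hp x).mapL T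
  simpa only [← map_smul, ← lp.single_smul, smul_eq_mul, mul_one] using hx

theorem norm_sub_sum_smul_apply_single_le (T : lp (fun _ : ℕ => 𝕜) 1 →L[𝕜] F)
    (x : lp (fun _ : ℕ => 𝕜) 1) {N : ℕ} {ε : ℝ} (hε : 0 ≤ ε)
    (hT : ∀ k, N ≤ k → ‖T (lp.single 1 k 1)‖ ≤ ε) :
    ‖T x - ∑ k ∈ Finset.range N, x k • T (lp.single 1 k 1)‖ ≤ ε * ‖x‖ := by
  have hnorm := lp.hasSum_norm (p := 1) (by norm_num) x
  simp only [ENNReal.toReal_one, Real.rpow_one] at hnorm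
  have htail := (hasSum_nat_add_iff' N).2 (hasSum_smul_apply_single ENNReal.one_ne_top T x)
  have hnorm_tail := ((hasSum_nat_add_iff' N).2 hnorm).mul_left ε
  calc ‖T x - ∑ k ∈ Finset.range N, x k • T (lp.single 1 k 1)‖
      ≤ ε * (‖x‖ - ∑ k ∈ Finset.range N, ‖x k‖) :=
        htail.norm_le_of_bounded hnorm_tail fun k => by
          rw [norm_smul, mul_comm]
          exact mul_le_mul_of_nonneg_right (hT _ (Nat.le_add_left N k)) (norm_nonneg _)
    _ ≤ ε * ‖x‖ := by
        gcongr
        exact sub_le_self _ (Finset.sum_nonneg fun k _ => norm_nonneg _)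

theorem isCompactOperator_of_tendsto_apply_single [CompleteSpace F]
    {T : lp (fun _ : ℕ => 𝕜) 1 →L[𝕜] F}
    (hT : Tendsto (fun n => T (lp.single 1 n 1)) atTop (𝓝 0)) : IsCompactOperator T := by
  let S : ℕ → lp (fun _ : ℕ => 𝕜) 1 →L[𝕜] F := fun N => ∑ k ∈ Finset.range N,
    (ContinuousLinearMap.toSpanSingleton 𝕜 (T (lp.single 1 k 1))).comp (lp.evalCLM 𝕜 _ 1 k)
  have hS : ∀ N, IsCompactOperator (S N) := fun N =>
    Submodule.sum_mem (compactOperator (RingHom.id 𝕜) _ F) fun k _ =>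
      (isCompactOperator_of_locallyCompactSpace_rng
        (ContinuousLinearMap.toSpanSingleton 𝕜 (T (lp.single 1 k 1)))).comp_clm
          (lp.evalCLM 𝕜 (fun _ : ℕ => 𝕜) 1 k)
  refine isCompactOperator_of_tendsto (Metric.tendsto_atTop.2 fun ε hε => ?_)
    (Eventually.of_forall hS)
  obtain ⟨N, hN⟩ := Metric.tendsto_atTop.1 hT (ε / 2) (half_pos hε)
  refine ⟨N, fun n hn => ?_⟩
  have hbound : ‖S n - T‖ ≤ ε / 2 := by
    refine ContinuousLinearMap.opNorm_le_bound _ (half_pos hε).le fun x => ?_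
    have hSx : S n x = ∑ k ∈ Finset.range n, x k • T (lp.single 1 k 1) := by
      simp only [S, sum_apply, ContinuousLinearMap.comp_apply,
        ContinuousLinearMap.toSpanSingleton_apply]
      rfl
    rw [sub_apply, norm_sub_rev, hSx]
    simpa using norm_sub_sum_smul_apply_single_le T x (half_pos hε).le fun k hk =>
      (by simpa using (hN k (hn.trans hk)).le)
  rw [dist_eq_norm]
  linarith

end ellOneDomain

namespace IsCesaroOp

variable {v w : ℕ → ℝ} {T : ellOne →L[ℂ] ellOne}

theorem apply_single (hT : IsCesaroOp v w T) (n m : ℕ) :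
    (T (lp.single 1 n 1) : ∀ _ : ℕ, ℂ) m
      = if n ≤ m then ((1 / v n * (w m / (m + 1)) : ℝ) : ℂ) else 0 := by
  rw [hT]
  split_ifs with hnm
  · rw [Finset.sum_eq_single n (fun k _ hk => by simp [hk])
      (fun hn => absurd (Finset.mem_range.2 (Nat.lt_succ_of_le hnm)) hn), lp.single_apply_self]
    push_cast
    ring
  · rw [Finset.sum_eq_zero fun k hk => ?_, mul_zero]
    have hkn : k ≠ n := by
      have := Finset.mem_range.1 hk
      omega
    simp [hkn]

theorem tendsto_apply_single_apply (hT : IsCesaroOp v w T) (m : ℕ) :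
    Tendsto (fun n => (T (lp.single 1 n 1) : ∀ _ : ℕ, ℂ) m) atTop (𝓝 0) :=
  tendsto_const_nhds.congr' <| (eventually_gt_atTop m).mono fun n hmn => by
    simp only [hT.apply_single, if_neg (not_le.2 hmn)]

theorem enorm_apply_single (hv : ∀ n, 0 < v n) (hw : ∀ n, 0 < w n) (hT : IsCesaroOp v w T)
    (n : ℕ) : ‖T (lp.single 1 n 1)‖ₑ
      = ENNReal.ofReal (1 / v n) * ∑' k : ℕ, ENNReal.ofReal (w (n + k) / (n + k + 1)) := by
  rw [lp.enorm_eq_tsum_enorm, ← (add_right_injective n).tsum_eq, ← ENNReal.tsum_mul_left]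
  · refine tsum_congr fun k => ?_
    have hv' := (hv n).le
    have hw' := (hw (n + k)).le
    rw [hT.apply_single, if_pos (Nat.le_add_right n k), ← ofReal_norm, Complex.norm_real,
      Real.norm_of_nonneg (by positivity), ENNReal.ofReal_mul (by positivity), Nat.cast_add]
  · intro m hm
    refine ⟨m - n, Nat.add_sub_cancel' ?_⟩
    by_contra hmn
    exact hm (by simp only [hT.apply_single, if_neg hmn, enorm_zero])

end IsCesaroOp

theorem cesaro_compact_iff_general (v w : ℕ → ℝ)
    (hv : ∀ n, 0 < v n)
    (hw : ∀ n, 0 < w n)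
    (T : ellOne →L[ℂ] ellOne) (hT : IsCesaroOp v w T) :
    IsCompactOperator T ↔
      Tendsto (fun n : ℕ =>
          ENNReal.ofReal (1 / v n) * ∑' k : ℕ, ENNReal.ofReal (w (n + k) / (n + k + 1)))
        atTop (nhds 0) := by
  simp_rw [← hT.enorm_apply_single hv hw, ← tendsto_zero_iff_enorm_tendsto_zero]
  have hbounded : Bornology.IsBounded (Set.range fun n => (lp.single 1 n 1 : ellOne)) :=
    isBounded_iff_forall_norm_le.2 ⟨1, by rintro _ ⟨n, rfl⟩; simp [lp.norm_single]⟩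
  exact ⟨fun hC => hC.tendsto_of_tendsto_apply hbounded
    (by simpa using hT.tendsto_apply_single_apply), isCompactOperator_of_tendsto_apply_single⟩

theorem cesaro_compact_iff (v w : ℕ → ℝ)
    (hv : ∀ n, 0 < v n) (hvb : ∃ C, ∀ n, v n ≤ C)
    (hw : ∀ n, 0 < w n) (hwb : ∃ C, ∀ n, w n ≤ C)
    (hM : Mvw v w ≠ ⊤)
    (T : ellOne →L[ℂ] ellOne) (hT : IsCesaroOp v w T) :
    IsCompactOperator T ↔
      Tendsto (fun n : ℕ =>
          ENNReal.ofReal (1 / v n) * ∑' k : ℕ, ENNReal.ofReal (w (n + k) / (n + k + 1)))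
        atTop (nhds 0) :=
  cesaro_compact_iff_general v w hv hw T hT
end
end

section
/- Let v be a bounded real sequence with v(n) > 0 for all n ≥ 1 and inf_{n≥1} v(n) = 0. Then there exists a decreasing sequence w with 0 < w(n) ≤ v(n) for all n, with w(n) → 0 as n → ∞, such that sup_{n≥1} (1/w(n)) ∑_{m=n}^∞ w(m)/m = ∞ (so, by the continuity criterion, the Cesàro operator does not map ℓ¹(w) into itself). -/
/-! Replace `v` by a positive antitone minorant `u` tending to `0`, then flatten it: `w` equals
`u` at the right endpoint on each block `[N, N')` between consecutive points of a sparse set, the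
blocks chosen so that `∑_{N ≤ m < N'} 1/(m+1)` is unbounded (the harmonic series diverges).
On such a block `w` is constant, so `(1/w N) ∑_{m ≥ N} w m/(m+1)` is at least that block sum. -/

open Filter Topology

noncomputable section

open Finset

lemma exists_pos_antitone_le_tendsto_zero {v : ℕ → ℝ} (hv : ∀ n, 0 < v n) :
    ∃ u : ℕ → ℝ, (∀ n, 0 < u n) ∧ Antitone u ∧ u ≤ v ∧ Tendsto u atTop (𝓝 0) := by
  set g : ℕ → ℝ := fun k => min (v k) (1 / (k + 1))
  set u : ℕ → ℝ := fun n => (range (n + 1)).inf' nonempty_range_add_one g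
  have hu_pos : ∀ n, 0 < u n := fun n =>
    (lt_inf'_iff _).mpr fun k _ => lt_min (hv k) Nat.one_div_pos_of_nat
  have hu_le_g : ∀ n, u n ≤ g n := fun n => inf'_le g (self_mem_range_succ n)
  refine ⟨u, hu_pos, fun m n hmn => inf'_mono g (range_subset_range.mpr (by omega)) _,
    fun n => (hu_le_g n).trans (min_le_left _ _), ?_⟩
  exact squeeze_zero (fun n => (hu_pos n).le) (fun n => (hu_le_g n).trans (min_le_right _ _))
    tendsto_one_div_add_atTop_nhds_zero_nat

lemma exists_harmonic_tail_ge (N : ℕ) (x : ℝ) :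
    ∃ L, x ≤ ∑ k ∈ range L, 1 / ((N : ℝ) + k + 1) := by
  set H : ℕ → ℝ := fun n => ∑ i ∈ range n, 1 / ((i : ℝ) + 1)
  have htail : ∀ L, ∑ k ∈ range L, 1 / ((N : ℝ) + k + 1) = H (N + L) - H N := fun L => by
    simp only [H, sum_range_add, Nat.cast_add, add_sub_cancel_left]
  have hlim : Tendsto (fun L => H (N + L) - H N) atTop atTop :=
    tendsto_atTop_add_const_right _ _
      (Real.tendsto_sum_range_one_div_nat_succ_atTop.comp (tendsto_add_atTop_nat N) |>.congr
        fun L => by rw [Function.comp_apply, add_comm L N])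
  obtain ⟨L, hL⟩ := (hlim.eventually_ge_atTop x).exists
  exact ⟨L, (htail L).symm ▸ hL⟩

def nextAbove (S : Set ℕ) (m : ℕ) : ℕ := sInf {b | b ∈ S ∧ m < b}

section nextAbove

variable {S : Set ℕ}

lemma nextAbove_spec (hS : ∀ m, ∃ b ∈ S, m < b) (m : ℕ) :
    nextAbove S m ∈ S ∧ m < nextAbove S m :=
  Nat.sInf_mem (hS m)

lemma monotone_nextAbove (hS : ∀ m, ∃ b ∈ S, m < b) : Monotone (nextAbove S) := fun _ m' h =>
  Nat.sInf_le ⟨(nextAbove_spec hS m').1, h.trans_lt (nextAbove_spec hS m').2⟩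

lemma nextAbove_eq_of_le_of_lt (hS : ∀ m, ∃ b ∈ S, m < b) {N m : ℕ} (hN : N ≤ m)
    (hm : m < nextAbove S N) : nextAbove S m = nextAbove S N :=
  have hmem : nextAbove S N ∈ {b | b ∈ S ∧ m < b} := ⟨(nextAbove_spec hS N).1, hm⟩
  (Nat.sInf_le hmem).antisymm (monotone_nextAbove hS hN)

end nextAbove

lemma exists_set_harmonic_gaps : ∃ S : Set ℕ, (∀ m, ∃ b ∈ S, m < b) ∧
    ∀ x : ℝ, ∃ N L, N + L ≤ nextAbove S N ∧ x ≤ ∑ k ∈ range L, 1 / ((N : ℝ) + k + 1) := by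
  choose L hL using exists_harmonic_tail_ge
  set n : ℕ → ℕ := fun j => Nat.rec 0 (fun j nj => nj + L nj j + 1) j
  have hn : StrictMono n := strictMono_nat_of_lt_succ fun j => by simp only [n]; omega
  have hS : ∀ m, ∃ b ∈ Set.range n, m < b := fun m => ⟨n (m + 1), ⟨m + 1, rfl⟩, hn.id_le _⟩
  refine ⟨Set.range n, hS, fun x => ?_⟩
  obtain ⟨j, hj⟩ := exists_nat_ge x
  obtain ⟨⟨i, hi⟩, hlt⟩ := nextAbove_spec hS (n j)
  refine ⟨n j, L (n j) j, le_of_lt ?_, hj.trans (hL _ _)⟩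
  calc n j + L (n j) j < n (j + 1) := Nat.lt_succ_self _
    _ ≤ n i := hn.monotone (hn.lt_iff_lt.mp (hi ▸ hlt))
    _ = nextAbove (Set.range n) (n j) := hi

lemma ofReal_harmonic_le_Mvw {w : ℕ → ℝ} (hw : ∀ n, 0 < w n) {N L : ℕ}
    (hflat : ∀ k < L, w (N + k) = w N) :
    ENNReal.ofReal (∑ k ∈ range L, 1 / ((N : ℝ) + k + 1)) ≤ Mvw w w := by
  have hterm : ∀ k, 0 ≤ w (N + k) / (N + k + 1) := fun k =>
    div_nonneg (hw (N + k)).le (by positivity)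
  have hblock : ∑ k ∈ range L, 1 / ((N : ℝ) + k + 1) =
      1 / w N * ∑ k ∈ range L, w (N + k) / (N + k + 1) := by
    rw [mul_sum]
    refine sum_congr rfl fun k hk => ?_
    rw [hflat k (mem_range.mp hk)]
    field_simp [(hw N).ne']
  calc ENNReal.ofReal (∑ k ∈ range L, 1 / ((N : ℝ) + k + 1))
      = ENNReal.ofReal (1 / w N) * ∑ k ∈ range L, ENNReal.ofReal (w (N + k) / (N + k + 1)) := by
        rw [hblock, ENNReal.ofReal_mul (one_div_pos.mpr (hw N)).le,
          ENNReal.ofReal_sum_of_nonneg fun k _ => hterm k]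
    _ ≤ ENNReal.ofReal (1 / w N) * ∑' k, ENNReal.ofReal (w (N + k) / (N + k + 1)) := by
        gcongr; exact ENNReal.sum_le_tsum _
    _ ≤ Mvw w w := le_iSup (fun n : ℕ => ENNReal.ofReal (1 / w n) *
          ∑' k : ℕ, ENNReal.ofReal (w (n + k) / (n + k + 1))) N

lemma Mvw_eq_top_of_flat_harmonic {w : ℕ → ℝ} (hw : ∀ n, 0 < w n)
    (h : ∀ x : ℝ, ∃ N L, (∀ k < L, w (N + k) = w N) ∧
      x ≤ ∑ k ∈ range L, 1 / ((N : ℝ) + k + 1)) :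
    Mvw w w = ⊤ := by
  refine ENNReal.eq_top_of_forall_nnreal_le fun r => ?_
  obtain ⟨N, L, hflat, hr⟩ := h r
  calc (r : ENNReal) = ENNReal.ofReal r := (ENNReal.ofReal_coe_nnreal).symm
    _ ≤ _ := ENNReal.ofReal_le_ofReal hr
    _ ≤ Mvw w w := ofReal_harmonic_le_Mvw hw hflat

theorem exists_decreasing_weight_cesaro_not_acting_general (v : ℕ → ℝ)
    (hv : ∀ n, 0 < v n) :
    ∃ w : ℕ → ℝ, (∀ n, 0 < w n) ∧ (∀ n, w n ≤ v n) ∧ Antitone w ∧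
      Tendsto w atTop (nhds 0) ∧ Mvw w w = ⊤ := by
  obtain ⟨u, hu_pos, hu_anti, hu_le, hu_lim⟩ := exists_pos_antitone_le_tendsto_zero hv
  obtain ⟨S, hS, hgaps⟩ := exists_set_harmonic_gaps
  have hlt : ∀ m, m < nextAbove S m := fun m => (nextAbove_spec hS m).2
  refine ⟨u ∘ nextAbove S, fun m => hu_pos _, fun m => (hu_anti (hlt m).le).trans (hu_le m),
    hu_anti.comp_monotone (monotone_nextAbove hS),
    hu_lim.comp (tendsto_atTop_mono (fun m => (hlt m).le) tendsto_id),
    Mvw_eq_top_of_flat_harmonic (fun m => hu_pos _) fun x => ?_⟩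
  obtain ⟨N, L, hNL, hx⟩ := hgaps x
  exact ⟨N, L, fun k hk => congrArg u
    (nextAbove_eq_of_le_of_lt hS (N.le_add_right k) (by omega)), hx⟩

theorem exists_decreasing_weight_cesaro_not_acting (v : ℕ → ℝ)
    (hv : ∀ n, 0 < v n) (hvb : ∃ C, ∀ n, v n ≤ C) (hinf : ⨅ n, v n = 0) :
    ∃ w : ℕ → ℝ, (∀ n, 0 < w n) ∧ (∀ n, w n ≤ v n) ∧ Antitone w ∧
      Tendsto w atTop (nhds 0) ∧ Mvw w w = ⊤ :=
  exists_decreasing_weight_cesaro_not_acting_general v hv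
end
end

section
/- Let v be a bounded real sequence with v(n) > 0 for all n ≥ 1 and inf_{n≥1} v(n) = 0. Then there exists a decreasing sequence u with 0 < u(n) ≤ v(n) for all n such that lim_{n→∞} (1/u(n)) ∑_{m=n}^∞ u(m)/m = 0 (so, by the compactness criterion, the Cesàro operator is a compact operator on ℓ¹(u)). -/
/-! Take `u n = ∏_{k ≤ n} min (v k) 1 / 2`. It is positive, below `v`, and each new factor is at
most `1/2`, so `u (n + k) ≤ 2⁻ᵏ u n`. Hence `∑_{m ≥ n} u m / m ≤ 2 u n / n`, and the ratio in the
compactness criterion is `O(1/n)`. -/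

open Filter Topology

noncomputable section

open scoped ENNReal

/-- The quantity `(1 / u n) ∑_{m ≥ n} u m / m` of the compactness criterion, with `n` standing
for the paper's `n + 1`. -/
def cesaroTailRatio (u : ℕ → ℝ) (n : ℕ) : ℝ≥0∞ :=
  ENNReal.ofReal (1 / u n) * ∑' k : ℕ, ENNReal.ofReal (u (n + k) / (n + k + 1))

section RatioBound

variable {u : ℕ → ℝ} {r : ℝ}

lemma le_pow_mul_of_succ_le_mul (hr : 0 ≤ r) (hu : ∀ n, u (n + 1) ≤ r * u n) (n k : ℕ) :
    u (n + k) ≤ r ^ k * u n :=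
  le_geom (u := fun k => u (n + k)) hr k fun i _ => hu (n + i)

lemma cesaroTailRatio_le (hpos : ∀ n, 0 < u n) (hr : 0 ≤ r) (hu : ∀ n, u (n + 1) ≤ r * u n)
    (n : ℕ) :
    cesaroTailRatio u n ≤ ENNReal.ofReal (1 / (n + 1)) * (1 - ENNReal.ofReal r)⁻¹ := by
  have hterm (k : ℕ) : ENNReal.ofReal (u (n + k) / (n + k + 1)) ≤
      ENNReal.ofReal (u n / (n + 1)) * ENNReal.ofReal r ^ k := by
    rw [← ENNReal.ofReal_pow hr, ← ENNReal.ofReal_mul (by have := hpos n; positivity)]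
    refine ENNReal.ofReal_le_ofReal ?_
    calc u (n + k) / (n + k + 1) ≤ r ^ k * u n / (n + 1) := by
          gcongr
          · have := hpos n; positivity
          · exact le_pow_mul_of_succ_le_mul hr hu n k
          · simp
      _ = u n / (n + 1) * r ^ k := by ring
  calc cesaroTailRatio u n
      ≤ ENNReal.ofReal (1 / u n) * ∑' k, ENNReal.ofReal (u n / (n + 1)) * ENNReal.ofReal r ^ k :=
        mul_le_mul_right (ENNReal.tsum_le_tsum hterm) _
    _ = ENNReal.ofReal (1 / u n * (u n / (n + 1))) * (1 - ENNReal.ofReal r)⁻¹ := by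
        rw [ENNReal.tsum_mul_left, ENNReal.tsum_geometric, ← mul_assoc,
          ← ENNReal.ofReal_mul (by have := hpos n; positivity)]
    _ = ENNReal.ofReal (1 / (n + 1)) * (1 - ENNReal.ofReal r)⁻¹ := by
        have := (hpos n).ne'
        field_simp

theorem tendsto_cesaroTailRatio_of_succ_le_mul (hpos : ∀ n, 0 < u n) (hr₀ : 0 ≤ r) (hr₁ : r < 1)
    (hu : ∀ n, u (n + 1) ≤ r * u n) :
    Tendsto (cesaroTailRatio u) atTop (𝓝 0) := by
  have hgeom : (1 - ENNReal.ofReal r)⁻¹ ≠ ∞ :=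
    ENNReal.inv_ne_top.2 (tsub_pos_of_lt (ENNReal.ofReal_lt_one.2 hr₁)).ne'
  have hbound : Tendsto (fun n : ℕ => ENNReal.ofReal (1 / (n + 1)) * (1 - ENNReal.ofReal r)⁻¹)
      atTop (𝓝 0) := by
    simpa using ENNReal.Tendsto.mul_const
      (ENNReal.tendsto_ofReal tendsto_one_div_add_atTop_nhds_zero_nat) (Or.inr hgeom)
  exact tendsto_of_tendsto_of_tendsto_of_le_of_le tendsto_const_nhds hbound (fun _ => zero_le)
    (cesaroTailRatio_le hpos hr₀ hu)

end RatioBound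

def geometricMinorant (v : ℕ → ℝ) (n : ℕ) : ℝ :=
  ∏ k ∈ Finset.range (n + 1), min (v k) 1 / 2

section GeometricMinorant

variable {v : ℕ → ℝ}

lemma geometricMinorant_factor_pos (hv : ∀ n, 0 < v n) (k : ℕ) : 0 < min (v k) 1 / 2 := by
  have := hv k
  positivity

lemma geometricMinorant_pos (hv : ∀ n, 0 < v n) (n : ℕ) : 0 < geometricMinorant v n :=
  Finset.prod_pos fun k _ => geometricMinorant_factor_pos hv k

lemma geometricMinorant_succ_le_half_mul (hv : ∀ n, 0 < v n) (n : ℕ) :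
    geometricMinorant v (n + 1) ≤ 1 / 2 * geometricMinorant v n := by
  unfold geometricMinorant
  rw [Finset.prod_range_succ, mul_comm]
  gcongr
  · exact (geometricMinorant_pos hv n).le
  · exact min_le_right _ _

lemma geometricMinorant_le (hv : ∀ n, 0 < v n) (n : ℕ) : geometricMinorant v n ≤ v n := by
  rw [geometricMinorant, Finset.prod_range_succ]
  have hprod : ∏ k ∈ Finset.range n, min (v k) 1 / 2 ≤ 1 :=
    Finset.prod_le_one (fun k _ => (geometricMinorant_factor_pos hv k).le)
      fun k _ => by linarith [min_le_right (v k) 1]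
  calc (∏ k ∈ Finset.range n, min (v k) 1 / 2) * (min (v n) 1 / 2) ≤ 1 * (min (v n) 1 / 2) := by
        gcongr
        exact (geometricMinorant_factor_pos hv n).le
    _ ≤ v n := by linarith [min_le_left (v n) 1, hv n]

lemma geometricMinorant_antitone (hv : ∀ n, 0 < v n) : Antitone (geometricMinorant v) :=
  antitone_nat_of_succ_le fun n => by
    linarith [geometricMinorant_succ_le_half_mul hv n, geometricMinorant_pos hv n]

end GeometricMinorant

theorem exists_decreasing_weight_cesaro_compact_general (v : ℕ → ℝ)
    (hv : ∀ n, 0 < v n) :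
    ∃ u : ℕ → ℝ, (∀ n, 0 < u n) ∧ (∀ n, u n ≤ v n) ∧ Antitone u ∧
      Tendsto (fun n : ℕ =>
          ENNReal.ofReal (1 / u n) * ∑' k : ℕ, ENNReal.ofReal (u (n + k) / (n + k + 1)))
        atTop (nhds 0) :=
  ⟨geometricMinorant v, geometricMinorant_pos hv, geometricMinorant_le hv,
    geometricMinorant_antitone hv,
    tendsto_cesaroTailRatio_of_succ_le_mul (geometricMinorant_pos hv) (by norm_num) (by norm_num)
      (geometricMinorant_succ_le_half_mul hv)⟩

theorem exists_decreasing_weight_cesaro_compact (v : ℕ → ℝ)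
    (hv : ∀ n, 0 < v n) (hvb : ∃ C, ∀ n, v n ≤ C) (hinf : ⨅ n, v n = 0) :
    ∃ u : ℕ → ℝ, (∀ n, 0 < u n) ∧ (∀ n, u n ≤ v n) ∧ Antitone u ∧
      Tendsto (fun n : ℕ =>
          ENNReal.ofReal (1 / u n) * ∑' k : ℕ, ENNReal.ofReal (u (n + k) / (n + k + 1)))
        atTop (nhds 0) :=
  exists_decreasing_weight_cesaro_compact_general v hv
end
end

section
/- Let w be a weight such that limsup_{n→∞} w(n+1)/w(n) < 1. Then lim_{n→∞} (1/w(n)) ∑_{m=n}^∞ w(m)/m = 0; in particular, by the compactness criterion, the Cesàro operator is a compact operator on ℓ¹(w). -/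
/-!
Choose `r` with `limsup w(n+1)/w(n) < r < 1`. From some index on, the terms `w(m)/(m+1)` then
decay at least geometrically with ratio `r`, so the tail `∑_{m ≥ n} w(m)/(m+1)` is at most
`(1 - r)⁻¹ · w(n)/(n+1)`. Dividing by `w(n)` leaves `(1 - r)⁻¹/(n+1) → 0`.
-/

open Filter Topology

open scoped ENNReal

theorem ENNReal.tsum_le_inv_one_sub_mul_of_le_mul {a : ℕ → ℝ≥0∞} {r : ℝ≥0∞}
    (h : ∀ k, a (k + 1) ≤ r * a k) : ∑' k, a k ≤ (1 - r)⁻¹ * a 0 := by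
  have hgeom : ∀ k, a k ≤ r ^ k * a 0 := by
    intro k
    induction k with
    | zero => simp
    | succ k ih =>
      calc a (k + 1) ≤ r * a k := h k
        _ ≤ r * (r ^ k * a 0) := by gcongr
        _ = r ^ (k + 1) * a 0 := by ring
  calc ∑' k, a k ≤ ∑' k, r ^ k * a 0 := ENNReal.tsum_le_tsum hgeom
    _ = (1 - r)⁻¹ * a 0 := by rw [ENNReal.tsum_mul_right, ENNReal.tsum_geometric]

theorem ofReal_div_succ_succ_le_ratio_mul {w : ℕ → ℝ} (hw : ∀ n, 0 < w n) (m : ℕ) :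
    ENNReal.ofReal (w (m + 1) / (m + 1 + 1)) ≤
      ENNReal.ofReal (w (m + 1) / w m) * ENNReal.ofReal (w m / (m + 1)) := by
  rw [← ENNReal.ofReal_mul (div_nonneg (hw _).le (hw m).le), div_mul_div_cancel₀ (hw m).ne']
  gcongr
  · exact (hw _).le
  · linarith

theorem inv_mul_tsum_div_succ_le {w : ℕ → ℝ} (hw : ∀ n, 0 < w n) {r : ℝ≥0∞} {n : ℕ}
    (hr : ∀ m ≥ n, ENNReal.ofReal (w (m + 1) / w m) ≤ r) :
    ENNReal.ofReal (1 / w n) * ∑' k : ℕ, ENNReal.ofReal (w (n + k) / (n + k + 1)) ≤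
      (1 - r)⁻¹ * ENNReal.ofReal (1 / (n + 1)) := by
  have htail : ∑' k : ℕ, ENNReal.ofReal (w (n + k) / (n + k + 1)) ≤
      (1 - r)⁻¹ * ENNReal.ofReal (w n / (n + 1)) := by
    refine (ENNReal.tsum_le_inv_one_sub_mul_of_le_mul (r := r) fun k => ?_).trans_eq (by simp)
    calc ENNReal.ofReal (w (n + (k + 1)) / (n + (k + 1 : ℕ) + 1))
        = ENNReal.ofReal (w (n + k + 1) / ((n + k : ℕ) + 1 + 1)) := by push_cast; ring_nf
      _ ≤ ENNReal.ofReal (w (n + k + 1) / w (n + k)) *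
            ENNReal.ofReal (w (n + k) / ((n + k : ℕ) + 1)) :=
        ofReal_div_succ_succ_le_ratio_mul hw (n + k)
      _ ≤ r * ENNReal.ofReal (w (n + k) / (n + k + 1)) := by
        push_cast
        gcongr
        exact hr (n + k) (Nat.le_add_right n k)
  calc ENNReal.ofReal (1 / w n) * ∑' k : ℕ, ENNReal.ofReal (w (n + k) / (n + k + 1))
      ≤ ENNReal.ofReal (1 / w n) * ((1 - r)⁻¹ * ENNReal.ofReal (w n / (n + 1))) := by
        gcongr
    _ = (1 - r)⁻¹ * ENNReal.ofReal (1 / w n * (w n / (n + 1))) := by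
        rw [ENNReal.ofReal_mul (one_div_nonneg.2 (hw n).le)]
        ring
    _ = (1 - r)⁻¹ * ENNReal.ofReal (1 / (n + 1)) := by
        congr 2
        field_simp [(hw n).ne']

theorem cesaro_compact_of_limsup_ratio_lt_one_general (w : ℕ → ℝ)
    (hw : ∀ n, 0 < w n)
    (hratio : Filter.limsup (fun n : ℕ => ENNReal.ofReal (w (n + 1) / w n)) atTop < 1) :
    Tendsto (fun n : ℕ =>
        ENNReal.ofReal (1 / w n) * ∑' k : ℕ, ENNReal.ofReal (w (n + k) / (n + k + 1)))
      atTop (nhds 0) := by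
  obtain ⟨r, hlimsup, hr1⟩ := exists_between hratio
  obtain ⟨N, hN⟩ := eventually_atTop.1 (eventually_lt_of_limsup_lt hlimsup)
  have hbound : ∀ n ≥ N,
      ENNReal.ofReal (1 / w n) * ∑' k : ℕ, ENNReal.ofReal (w (n + k) / (n + k + 1)) ≤
        (1 - r)⁻¹ * ENNReal.ofReal (1 / (n + 1)) := fun n hn =>
    inv_mul_tsum_div_succ_le hw fun m hm => (hN m (hn.trans hm)).le
  have hmajorant : Tendsto (fun n : ℕ => (1 - r)⁻¹ * ENNReal.ofReal (1 / (n + 1))) atTop (𝓝 0) := by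
    have h := ENNReal.Tendsto.const_mul
      (ENNReal.tendsto_ofReal tendsto_one_div_add_atTop_nhds_zero_nat)
      (Or.inr (ENNReal.inv_ne_top.2 (tsub_pos_of_lt hr1).ne'))
    simpa using h
  exact tendsto_of_tendsto_of_tendsto_of_le_of_le' tendsto_const_nhds hmajorant
    (Eventually.of_forall fun _ => zero_le) (eventually_atTop.2 ⟨N, hbound⟩)

theorem cesaro_compact_of_limsup_ratio_lt_one (w : ℕ → ℝ)
    (hw : ∀ n, 0 < w n) (hwb : ∃ C, ∀ n, w n ≤ C)
    (hratio : Filter.limsup (fun n : ℕ => ENNReal.ofReal (w (n + 1) / w n)) atTop < 1) :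
    Tendsto (fun n : ℕ =>
        ENNReal.ofReal (1 / w n) * ∑' k : ℕ, ENNReal.ofReal (w (n + k) / (n + k + 1)))
      atTop (nhds 0) :=
  cesaro_compact_of_limsup_ratio_lt_one_general w hw hratio
end

section
/- Let v and w be weights such that the sequence (v(n)/w(n))_{n≥n₀} is decreasing for some n₀ ∈ ℕ. Then: (i) if sup_{n≥1} (1/w(n)) ∑_{m=n}^∞ w(m)/m < ∞, then sup_{n≥1} (1/v(n)) ∑_{m=n}^∞ v(m)/m < ∞ (continuity of the Cesàro operator on ℓ¹(w) transfers to ℓ¹(v)); (ii) if (1/w(n)) ∑_{m=n}^∞ w(m)/m → 0 as n → ∞, then (1/v(n)) ∑_{m=n}^∞ v(m)/m → 0 as n → ∞ (compactness transfers as well). -/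
/- Index `n : ℕ` is the paper's `n + 1`. -/

open Filter Topology

noncomputable section

/-!
For `n ≥ n₀` the monotonicity of `v / w` gives `v m ≤ (v n / w n) w m` for every `m ≥ n`, hence
`(1 / v n) ∑_{m ≥ n} v m / m ≤ (1 / w n) ∑_{m ≥ n} w m / m`. This comparison passes the limit `0`
from `w` to `v` directly, and the supremum as well once the finitely many terms `n < n₀` are known
to be finite, which follows from the finiteness of the tails of `w`.
-/

namespace Cesaro

open ENNReal

def tail (w : ℕ → ℝ) (n : ℕ) : ℝ≥0∞ :=
  ∑' k : ℕ, ENNReal.ofReal (w (n + k) / (n + k + 1))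

def ratio (w : ℕ → ℝ) (n : ℕ) : ℝ≥0∞ :=
  ENNReal.ofReal (1 / w n) * tail w n

theorem tail_ne_top_of_add {w : ℕ → ℝ} {n : ℕ} (m : ℕ) (h : tail w (n + m) ≠ ∞) :
    tail w n ≠ ∞ := by
  have hsplit := ENNReal.summable.sum_add_tsum_nat_add'
    (f := fun k : ℕ => ENNReal.ofReal (w (n + k) / (n + k + 1))) (k := m)
  have htail : ∑' k : ℕ, ENNReal.ofReal (w (n + (k + m)) / (n + (k + m : ℕ) + 1))
      = tail w (n + m) := by
    refine tsum_congr fun k => ?_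
    rw [show n + (k + m) = n + m + k by omega]
    push_cast
    ring_nf
  rw [tail, ← hsplit, htail]
  exact add_ne_top.2 ⟨sum_ne_top.2 fun _ _ => ofReal_ne_top, h⟩

theorem tail_ne_top_of_ratio_ne_top {w : ℕ → ℝ} {n : ℕ} (hw : 0 < w n)
    (h : ratio w n ≠ ∞) : tail w n ≠ ∞ := by
  have hpos : ENNReal.ofReal (1 / w n) ≠ 0 := (ofReal_pos.2 (one_div_pos.2 hw)).ne'
  exact fun htop => h (by rw [ratio, htop, mul_top hpos])

theorem tail_le_mul_of_antitoneOn {v w : ℕ → ℝ} (hw : ∀ n, 0 < w n) {n₀ n : ℕ}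
    (hmono : AntitoneOn (fun n => v n / w n) (Set.Ici n₀)) (hn : n₀ ≤ n) :
    tail v n ≤ ENNReal.ofReal (v n / w n) * tail w n := by
  rw [tail, tail, ← ENNReal.tsum_mul_left]
  refine ENNReal.tsum_le_tsum fun k => ?_
  have hratio : v (n + k) / w (n + k) ≤ v n / w n :=
    hmono hn (Set.mem_Ici.2 (by omega)) (Nat.le_add_right n k)
  have hterm : 0 ≤ w (n + k) / ((n : ℝ) + k + 1) := by have := hw (n + k); positivity
  calc ENNReal.ofReal (v (n + k) / ((n : ℝ) + k + 1))
      = ENNReal.ofReal (v (n + k) / w (n + k) * (w (n + k) / ((n : ℝ) + k + 1))) := by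
        rw [div_mul_div_cancel₀ (hw (n + k)).ne']
    _ ≤ ENNReal.ofReal (v n / w n * (w (n + k) / ((n : ℝ) + k + 1))) :=
        ofReal_le_ofReal (mul_le_mul_of_nonneg_right hratio hterm)
    _ = ENNReal.ofReal (v n / w n) * ENNReal.ofReal (w (n + k) / ((n : ℝ) + k + 1)) :=
        ofReal_mul' hterm

theorem ratio_le_of_antitoneOn {v w : ℕ → ℝ} (hv : ∀ n, 0 < v n) (hw : ∀ n, 0 < w n)
    {n₀ n : ℕ} (hmono : AntitoneOn (fun n => v n / w n) (Set.Ici n₀)) (hn : n₀ ≤ n) :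
    ratio v n ≤ ratio w n := by
  have hcancel : 1 / v n * (v n / w n) = 1 / w n := by field_simp [(hv n).ne']
  calc ratio v n ≤ ENNReal.ofReal (1 / v n) * (ENNReal.ofReal (v n / w n) * tail w n) :=
        mul_le_mul_right (tail_le_mul_of_antitoneOn hw hmono hn) _
    _ = ratio w n := by
        rw [← mul_assoc, ← ofReal_mul (one_div_nonneg.2 (hv n).le), hcancel, ratio]

theorem iSup_ratio_ne_top_of_antitoneOn {v w : ℕ → ℝ} (hv : ∀ n, 0 < v n)
    (hw : ∀ n, 0 < w n) {n₀ : ℕ} (hmono : AntitoneOn (fun n => v n / w n) (Set.Ici n₀))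
    (hW : ⨆ n, ratio w n ≠ ∞) : ⨆ n, ratio v n ≠ ∞ := by
  have hle : ∀ n, n₀ ≤ n → ratio v n ≤ ⨆ n, ratio w n := fun n hn =>
    (ratio_le_of_antitoneOn hv hw hmono hn).trans (le_iSup (ratio w) n)
  have htail : ∀ n, tail v n ≠ ∞ := fun n =>
    tail_ne_top_of_add n₀ <| ne_top_of_le_ne_top
      (mul_ne_top ofReal_ne_top
        (tail_ne_top_of_ratio_ne_top (hw _) (ne_top_of_le_ne_top hW (le_iSup _ _))))
      (tail_le_mul_of_antitoneOn hw hmono (Nat.le_add_left n₀ n))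
  have hbound : ⨆ n, ratio v n ≤ (⨆ n, ratio w n) + ∑ n ∈ Finset.range n₀, ratio v n := by
    refine iSup_le fun n => ?_
    rcases le_or_gt n₀ n with hn | hn
    · exact le_add_right (hle n hn)
    · exact le_add_left (Finset.single_le_sum (fun _ _ => zero_le) (Finset.mem_range.2 hn))
  exact ne_top_of_le_ne_top
    (add_ne_top.2 ⟨hW, sum_ne_top.2 fun n _ => mul_ne_top ofReal_ne_top (htail n)⟩) hbound

end Cesaro

theorem cesaro_comparison_general (v w : ℕ → ℝ)
    (hv : ∀ n, 0 < v n)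
    (hw : ∀ n, 0 < w n)
    (hmono : ∃ n₀ : ℕ, AntitoneOn (fun n => v n / w n) (Set.Ici n₀)) :
    (Mvw w w ≠ ⊤ → Mvw v v ≠ ⊤) ∧
      ((Tendsto (fun n : ℕ =>
            ENNReal.ofReal (1 / w n) * ∑' k : ℕ, ENNReal.ofReal (w (n + k) / (n + k + 1)))
          atTop (nhds 0)) →
        Tendsto (fun n : ℕ =>
            ENNReal.ofReal (1 / v n) * ∑' k : ℕ, ENNReal.ofReal (v (n + k) / (n + k + 1)))
          atTop (nhds 0)) := by
  obtain ⟨n₀, hmono⟩ := hmono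
  refine ⟨Cesaro.iSup_ratio_ne_top_of_antitoneOn hv hw hmono, fun hW => ?_⟩
  refine tendsto_of_tendsto_of_tendsto_of_le_of_le' tendsto_const_nhds hW
    (Eventually.of_forall fun n => zero_le) ?_
  filter_upwards [eventually_ge_atTop n₀] with n hn
  exact Cesaro.ratio_le_of_antitoneOn hv hw hmono hn

theorem cesaro_comparison (v w : ℕ → ℝ)
    (hv : ∀ n, 0 < v n) (hvb : ∃ C, ∀ n, v n ≤ C)
    (hw : ∀ n, 0 < w n) (hwb : ∃ C, ∀ n, w n ≤ C)
    (hmono : ∃ n₀ : ℕ, AntitoneOn (fun n => v n / w n) (Set.Ici n₀)) :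
    (Mvw w w ≠ ⊤ → Mvw v v ≠ ⊤) ∧
      ((Tendsto (fun n : ℕ =>
            ENNReal.ofReal (1 / w n) * ∑' k : ℕ, ENNReal.ofReal (w (n + k) / (n + k + 1)))
          atTop (nhds 0)) →
        Tendsto (fun n : ℕ =>
            ENNReal.ofReal (1 / v n) * ∑' k : ℕ, ENNReal.ofReal (v (n + k) / (n + k + 1)))
          atTop (nhds 0)) :=
  cesaro_comparison_general v w hv hw hmono
end
end

section
/- Let w be a weight. The following are equivalent: (a) ∑_{n≥1} n^k w(n) < ∞ for every k ∈ ℕ (w is rapidly decreasing); (b) ∑_{n≥1} n^t w(n) < ∞ for every t ∈ ℝ (i.e., R_w = ℝ). If moreover M_w < ∞ and T : ℓ¹ → ℓ¹ is the continuous linear operator satisfying (T x)(n) = (w(n)/n) ∑_{k=1}^n x(k)/w(k) for all x ∈ ℓ¹ and n ≥ 1, then (a)–(b) are also equivalent to: (c) for every integer m ≥ 1 the number 1/m is an eigenvalue of T, i.e., T x = (1/m)·x for some nonzero x ∈ ℓ¹. -/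
/-! Writing `y n = x n / w n`, the eigen-equation `T x = (r + 1)⁻¹ • x` becomes
`(r + 1) ∑_{j ≤ n} y j = (n + 1) y n`. Its solutions are exactly the multiples of `n ↦ n.choose r`:
by the hockey-stick identity `n.choose r` solves it, and a solution vanishing at `r` vanishes
everywhere, by the recurrence `(n + 1) y n = (n + 1 - r) y (n + 1)` obtained by differencing.
Hence `1 / (r + 1)` is an eigenvalue iff `∑ n.choose r * w n < ∞`, which, as
`n.choose r = Θ(n ^ r)`, is the summability of `(n + 1) ^ r * w n`. -/

-- Index `n : ℕ` stands for the paper's `n + 1`.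

open Filter Topology

noncomputable section

open Finset Asymptotics

theorem Nat.sum_range_choose_eq_choose_add_one (r N : ℕ) :
    ∑ j ∈ range N, j.choose r = N.choose (r + 1) := by
  induction N with
  | zero => simp
  | succ N ih => rw [sum_range_succ, ih, Nat.choose_succ_succ, add_comm]

theorem summable_add_one_pow_mul_iff_summable_choose_mul (r : ℕ) (u : ℕ → ℝ) :
    (Summable fun n : ℕ => ((n : ℝ) + 1) ^ r * u n) ↔
      Summable fun n : ℕ => (n.choose r : ℝ) * u n := by
  have hlin : (fun n : ℕ => (n : ℝ) + 1) ~[atTop] fun n => (n : ℝ) :=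
    IsEquivalent.refl.add_isLittleO
      ((isLittleO_const_id_atTop (1 : ℝ)).comp_tendsto tendsto_natCast_atTop_atTop)
  have hΘ : (fun n : ℕ => ((n : ℝ) + 1) ^ r) =Θ[atTop] fun n => (n.choose r : ℝ) :=
    (hlin.pow r).isTheta.trans (isTheta_choose r).symm
  exact ⟨fun h => summable_of_isBigO_nat h (hΘ.symm.isBigO.mul (isBigO_refl u atTop)),
    fun h => summable_of_isBigO_nat h (hΘ.isBigO.mul (isBigO_refl u atTop))⟩

theorem forall_summable_pow_mul_iff_forall_summable_rpow_mul {u : ℕ → ℝ} (hu : ∀ n, 0 ≤ u n) :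
    (∀ k : ℕ, Summable fun n : ℕ => ((n : ℝ) + 1) ^ k * u n) ↔
      ∀ t : ℝ, Summable fun n : ℕ => ((n : ℝ) + 1) ^ t * u n := by
  refine ⟨fun h t => (h ⌈t⌉₊).of_nonneg_of_le (fun n => by have := hu n; positivity)
    fun n => ?_, fun h k => by simpa only [Real.rpow_natCast] using h k⟩
  refine mul_le_mul_of_nonneg_right ?_ (hu n)
  rw [← Real.rpow_natCast]
  exact Real.rpow_le_rpow_of_exponent_le (by linarith [n.cast_nonneg (α := ℝ)]) (Nat.le_ceil t)

section PartialSums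

variable {K : Type*} [Field K] [CharZero K] {r : ℕ} {z : ℕ → K}

theorem eq_zero_of_add_one_mul_sum_range_eq
    (hz : ∀ n, ((r : K) + 1) * ∑ j ∈ range (n + 1), z j = ((n : K) + 1) * z n) (hr : z r = 0) :
    ∀ n, z n = 0 := by
  have step (n : ℕ) : ((n : K) + 1) * z n = ((n : K) + 1 - r) * z (n + 1) := by
    have h := hz (n + 1)
    rw [sum_range_succ, mul_add, hz n] at h
    push_cast at h
    linear_combination h
  intro n
  induction n with
  | zero =>
    rcases eq_or_ne r 0 with rfl | hr0
    · exact hr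
    · have h := hz 0
      simp only [zero_add, range_one, sum_singleton, Nat.cast_zero] at h
      have : (r : K) * z 0 = 0 := by linear_combination h
      exact (mul_eq_zero.1 this).resolve_left (Nat.cast_ne_zero.2 hr0)
  | succ n ih =>
    rcases eq_or_ne (n + 1) r with rfl | hnr
    · exact hr
    · have h := step n
      rw [ih, mul_zero, eq_comm] at h
      refine (mul_eq_zero.1 h).resolve_left (sub_ne_zero.2 ?_)
      exact_mod_cast hnr

theorem add_one_mul_sum_range_choose (n : ℕ) :
    ((r : K) + 1) * ∑ j ∈ range (n + 1), (j.choose r : K) = ((n : K) + 1) * n.choose r := by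
  have h := Nat.add_one_mul_choose_eq n r
  rw [← Nat.sum_range_choose_eq_choose_add_one] at h
  rw [mul_comm]
  exact_mod_cast h.symm

theorem eq_mul_choose_of_add_one_mul_sum_range_eq
    (hz : ∀ n, ((r : K) + 1) * ∑ j ∈ range (n + 1), z j = ((n : K) + 1) * z n) (n : ℕ) :
    z n = z r * n.choose r := by
  have hdiff (m : ℕ) : ((r : K) + 1) * ∑ j ∈ range (m + 1), (z j - z r * j.choose r) =
      ((m : K) + 1) * (z m - z r * m.choose r) := by
    rw [sum_sub_distrib, ← mul_sum, mul_sub, hz, mul_left_comm, add_one_mul_sum_range_choose]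
    ring
  exact sub_eq_zero.1 (eq_zero_of_add_one_mul_sum_range_eq hdiff (by simp) n)

end PartialSums

theorem IsCesaroOp.apply_eq_inv_smul_iff {v w : ℕ → ℝ} {T : ellOne →L[ℂ] ellOne}
    (hT : IsCesaroOp v w T) (hw : ∀ n, w n ≠ 0) {c : ℂ} (hc : c ≠ 0) (x : ellOne) :
    T x = c⁻¹ • x ↔ ∀ n, c * ∑ k ∈ range (n + 1), (x : ℕ → ℂ) k / v k =
      ((n : ℂ) + 1) * ((x : ℕ → ℂ) n / w n) := by
  rw [lp.ext_iff, funext_iff]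
  refine forall_congr' fun n => ?_
  have hwn : (w n : ℂ) ≠ 0 := Complex.ofReal_ne_zero.2 (hw n)
  rw [hT, lp.coeFn_smul, Pi.smul_apply, smul_eq_mul]
  push_cast
  field_simp

section Eigenvectors

variable {w : ℕ → ℝ} {T : ellOne →L[ℂ] ellOne} {r : ℕ}

theorem exists_eigenvector_of_summable_choose_mul (hw : ∀ n, 0 < w n) (hT : IsCesaroOp w w T)
    (hs : Summable fun n : ℕ => (n.choose r : ℝ) * w n) :
    ∃ x : ellOne, x ≠ 0 ∧ T x = ((r : ℂ) + 1)⁻¹ • x := by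
  have hmem : Memℓp (fun n => ((n.choose r * w n : ℝ) : ℂ)) 1 :=
    memℓp_gen <| by simpa [abs_of_pos (hw _)] using hs
  have hwn (n : ℕ) : (w n : ℂ) ≠ 0 := Complex.ofReal_ne_zero.2 (hw n).ne'
  refine ⟨⟨_, hmem⟩, fun h => ?_, (hT.apply_eq_inv_smul_iff (fun n => (hw n).ne')
    (Nat.cast_add_one_ne_zero r) _).2 fun n => ?_⟩
  · have := congrArg (fun x : ellOne => (x : ℕ → ℂ) r) h
    simp [(hw r).ne'] at this
  · simp only [Complex.ofReal_mul, Complex.ofReal_natCast, mul_div_cancel_right₀ _ (hwn _)]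
    exact add_one_mul_sum_range_choose n

theorem summable_choose_mul_of_eigenvector (hw : ∀ n, 0 < w n) (hT : IsCesaroOp w w T)
    {x : ellOne} (hx : x ≠ 0) (hTx : T x = ((r : ℂ) + 1)⁻¹ • x) :
    Summable fun n : ℕ => (n.choose r : ℝ) * w n := by
  set y : ℕ → ℂ := fun n => (x : ℕ → ℂ) n / w n
  have hy := eq_mul_choose_of_add_one_mul_sum_range_eq
    ((hT.apply_eq_inv_smul_iff (fun n => (hw n).ne') (Nat.cast_add_one_ne_zero r) x).1 hTx)
  have hx_eq (n : ℕ) : (x : ℕ → ℂ) n = y r * ((n.choose r * w n : ℝ) : ℂ) := by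
    have hwn : (w n : ℂ) ≠ 0 := Complex.ofReal_ne_zero.2 (hw n).ne'
    rw [← div_mul_cancel₀ ((x : ℕ → ℂ) n) hwn, hy n]
    push_cast
    ring
  have hyr : y r ≠ 0 := fun h => hx (lp.ext (funext fun n => by simp [hx_eq n, h]))
  have hsum : Summable fun n => ‖(x : ℕ → ℂ) n‖ := by
    simpa using (lp.memℓp x).summable (by norm_num)
  rw [← summable_mul_left_iff (norm_ne_zero_iff.2 hyr)]
  refine hsum.congr fun n => ?_
  rw [hx_eq, norm_mul, Complex.norm_real, Real.norm_of_nonneg (by have := (hw n).le; positivity)]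

end Eigenvectors

theorem rapidly_decreasing_iff_general (w : ℕ → ℝ)
    (hw : ∀ n, 0 < w n) :
    ((∀ k : ℕ, Summable fun n : ℕ => ((n : ℝ) + 1) ^ k * w n) ↔
        (∀ t : ℝ, Summable fun n : ℕ => ((n : ℝ) + 1) ^ t * w n)) ∧
      (Mvw w w ≠ ⊤ → ∀ T : ellOne →L[ℂ] ellOne, IsCesaroOp w w T →
        ((∀ k : ℕ, Summable fun n : ℕ => ((n : ℝ) + 1) ^ k * w n) ↔
          (∀ m : ℕ, 1 ≤ m → ∃ x : ellOne, x ≠ 0 ∧ T x = ((m : ℂ))⁻¹ • x))) := by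
  refine ⟨forall_summable_pow_mul_iff_forall_summable_rpow_mul fun n => (hw n).le,
    fun _ T hT => ?_⟩
  simp_rw [summable_add_one_pow_mul_iff_summable_choose_mul]
  constructor
  · intro hs m hm
    obtain ⟨r, rfl⟩ := Nat.exists_eq_add_of_le' hm
    push_cast
    exact exists_eigenvector_of_summable_choose_mul hw hT (hs r)
  · intro heig r
    obtain ⟨x, hx, hTx⟩ := heig (r + 1) r.succ_pos
    push_cast at hTx
    exact summable_choose_mul_of_eigenvector hw hT hx hTx

theorem rapidly_decreasing_iff (w : ℕ → ℝ)
    (hw : ∀ n, 0 < w n) (hwb : ∃ C, ∀ n, w n ≤ C) :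
    ((∀ k : ℕ, Summable fun n : ℕ => ((n : ℝ) + 1) ^ k * w n) ↔
        (∀ t : ℝ, Summable fun n : ℕ => ((n : ℝ) + 1) ^ t * w n)) ∧
      (Mvw w w ≠ ⊤ → ∀ T : ellOne →L[ℂ] ellOne, IsCesaroOp w w T →
        ((∀ k : ℕ, Summable fun n : ℕ => ((n : ℝ) + 1) ^ k * w n) ↔
          (∀ m : ℕ, 1 ≤ m → ∃ x : ellOne, x ≠ 0 ∧ T x = ((m : ℂ))⁻¹ • x))) :=
  rapidly_decreasing_iff_general w hw
end
end

section
/- Let w be a weight with M_w < ∞ and let T : ℓ¹ → ℓ¹ be the continuous linear operator satisfying (T x)(n) = (w(n)/n) ∑_{k=1}^n x(k)/w(k) for all x ∈ ℓ¹ and n ≥ 1 (the Cesàro operator 𝒞^{(1,w)} on ℓ¹(w) in the coordinates of Φ_w). Then Σ₀ := {0} ∪ {1/m : m ∈ ℕ, m ≥ 1} is contained in σ(T), the spectrum of T over ℂ. -/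
/- STATEMENT 8: If M_w < ∞ and T is the transferred Cesàro operator on ℓ¹, then
Σ₀ = {0} ∪ {1/m : m ≥ 1} ⊆ σ(T).  Index `n : ℕ` corresponds to the paper's `n+1`. -/

open Filter Topology

noncomputable section

open scoped ENNReal

section LowerTriangular

variable {𝕜 : Type*} [NormedField 𝕜] {p : ℝ≥0∞} [Fact (1 ≤ p)]

def HasLowerTriangularMatrix (A : lp (fun _ : ℕ => 𝕜) p →L[𝕜] lp (fun _ : ℕ => 𝕜) p)
    (d : ℕ → 𝕜) : Prop :=
  ∃ a : ℕ → ℕ → 𝕜, ∀ x n, A x n = d n * x n + ∑ k ∈ Finset.range n, a n k * x k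

namespace HasLowerTriangularMatrix

variable {A : lp (fun _ : ℕ => 𝕜) p →L[𝕜] lp (fun _ : ℕ => 𝕜) p} {d : ℕ → 𝕜}

theorem apply_eq_zero_of_lt (hA : HasLowerTriangularMatrix A d) {μ : 𝕜} {j : ℕ}
    (hd : ∀ k < j, d k ≠ μ) {x : lp (fun _ : ℕ => 𝕜) p} (hx : ∀ k < j, A x k = μ * x k) :
    ∀ k < j, x k = 0 := by
  obtain ⟨a, ha⟩ := hA
  intro k
  induction k using Nat.strong_induction_on with
  | _ k ih =>
    intro hk
    have hsum : ∑ i ∈ Finset.range k, a k i * x i = 0 :=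
      Finset.sum_eq_zero fun i hi => by
        rw [ih i (Finset.mem_range.mp hi) ((Finset.mem_range.mp hi).trans hk), mul_zero]
    have hxk : (μ - d k) * x k = 0 := by
      have := ha x k
      rw [hsum, add_zero, hx k hk] at this
      rw [sub_mul, this, sub_self]
    exact (mul_eq_zero.mp hxk).resolve_left (sub_ne_zero.mpr (hd k hk).symm)

/-- At the first index `j₀` where the value `d j` occurs, the basis vector `e j₀` is not in the
range of `d j - A`. -/
theorem diag_mem_spectrum (hA : HasLowerTriangularMatrix A d) (j : ℕ) : d j ∈ spectrum 𝕜 A := by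
  classical
  have hex : ∃ i, d i = d j := ⟨j, rfl⟩
  set j₀ := Nat.find hex
  have hj₀ : d j₀ = d j := Nat.find_spec hex
  have hd : ∀ k < j₀, d k ≠ d j := fun k hk => Nat.find_min hex hk
  intro hunit
  obtain ⟨B, hB⟩ := hunit.exists_right_inv
  set e := lp.single (E := fun _ : ℕ => 𝕜) p j₀ 1
  set x := B e
  have hsolve : d j • x - A x = e := by
    simpa [Algebra.algebraMap_eq_smul_one] using congrArg (· e) hB
  have hAx : ∀ k, A x k = d j * x k - e k := fun k => by
    rw [← congrArg (· k) hsolve, lp.coeFn_sub, lp.coeFn_smul, Pi.sub_apply, Pi.smul_apply,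
      smul_eq_mul, sub_sub_cancel]
  have hx : ∀ k < j₀, x k = 0 := hA.apply_eq_zero_of_lt hd fun k hk => by
    rw [hAx, lp.single_apply_ne p j₀ _ hk.ne, sub_zero]
  obtain ⟨a, ha⟩ := hA
  have hdiag := ha x j₀
  rw [Finset.sum_eq_zero fun i hi => by rw [hx i (Finset.mem_range.mp hi), mul_zero], add_zero,
    hAx, hj₀, lp.single_apply_self] at hdiag
  simp at hdiag

end HasLowerTriangularMatrix

end LowerTriangular

theorem IsCesaroOp.hasLowerTriangularMatrix {v w : ℕ → ℝ} {T : ellOne →L[ℂ] ellOne}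
    (hT : IsCesaroOp v w T) :
    HasLowerTriangularMatrix T fun n => ((w n / (n + 1) : ℝ) : ℂ) / (v n : ℂ) := by
  refine ⟨fun n k => ((w n / (n + 1) : ℝ) : ℂ) / (v k : ℂ), fun x n => ?_⟩
  rw [hT x n, Finset.sum_range_succ, mul_add, Finset.mul_sum, add_comm]
  congr 1
  · ring
  · exact Finset.sum_congr rfl fun k _ => by ring

theorem sigma_zero_subset_spectrum_general (w : ℕ → ℝ)
    (hw : ∀ n, 0 < w n)
    (T : ellOne →L[ℂ] ellOne) (hT : IsCesaroOp w w T) :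
    ({0} ∪ {z : ℂ | ∃ m : ℕ, 1 ≤ m ∧ z = ((m : ℂ))⁻¹}) ⊆ spectrum ℂ T := by
  have hdiag : ∀ n : ℕ, ((n + 1 : ℕ) : ℂ)⁻¹ ∈ spectrum ℂ T := fun n => by
    have hwn : (w n : ℂ) ≠ 0 := Complex.ofReal_ne_zero.mpr (hw n).ne'
    convert hT.hasLowerTriangularMatrix.diag_mem_spectrum n using 1
    push_cast
    field_simp
  rintro z (rfl | ⟨m, hm, rfl⟩)
  · have hlim : Tendsto (fun n : ℕ => ((n + 1 : ℕ) : ℂ)⁻¹) atTop (𝓝 0) := by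
      simpa [one_div] using tendsto_one_div_add_atTop_nhds_zero_nat (𝕜 := ℂ)
    exact (spectrum.isClosed T).mem_of_tendsto hlim (Eventually.of_forall hdiag)
  · obtain ⟨n, rfl⟩ := Nat.exists_eq_add_of_le' hm
    exact hdiag n

theorem sigma_zero_subset_spectrum (w : ℕ → ℝ)
    (hw : ∀ n, 0 < w n) (hwb : ∃ C, ∀ n, w n ≤ C)
    (hM : Mvw w w ≠ ⊤)
    (T : ellOne →L[ℂ] ellOne) (hT : IsCesaroOp w w T) :
    ({0} ∪ {z : ℂ | ∃ m : ℕ, 1 ≤ m ∧ z = ((m : ℂ))⁻¹}) ⊆ spectrum ℂ T :=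
  sigma_zero_subset_spectrum_general w hw T hT
end
end

section
/- Let w be a weight with M_w < ∞ and let T : ℓ¹ → ℓ¹ be the continuous linear operator satisfying (T x)(n) = (w(n)/n) ∑_{k=1}^n x(k)/w(k) for all x ∈ ℓ¹ and n ≥ 1. Then a number λ ∈ ℂ is an eigenvalue of T (i.e., T x = λx for some nonzero x ∈ ℓ¹) if and only if λ = 1/m for some integer m ≥ 1 with ∑_{n≥1} n^{m−1} w(n) < ∞. In particular, the point spectrum of 𝒞^{(1,w)} equals {1/m : m ≥ 1 and (m−1) ∈ R_w}; it equals all of {1/m : m ≥ 1} when R_w = ℝ and is a finite (possibly empty) set when R_w ≠ ℝ. -/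
/- STATEMENT 10: λ is an eigenvalue of T iff λ = 1/m for some integer m ≥ 1 with
∑ n^{m−1} w(n) < ∞ (here m = m'+1 with m' : ℕ, so the exponent m−1 becomes m').
Index `n : ℕ` corresponds to the paper's `n+1`. -/

open Filter Topology

noncomputable section

/-!
Writing `y n = x n / w n`, the equation `T x = λ x` says that `y` is an eigen-sequence of the
plain Cesàro mean, `λ (n + 1) y n = ∑_{k ≤ n} y k`. At the first index `m` with `y m ≠ 0` this
forces `λ = 1 / (m + 1)`. By the hockey-stick identity `n ↦ n.choose m` solves the equation for
that `λ`, and since `1 / (n + 1) ≠ 1 / (m + 1)` for `n ≠ m` a solution is determined by its value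
at `m`; so `x` is a multiple of `n ↦ w n * n.choose m`. That sequence is summable exactly when
`∑ (n + 1) ^ m * w n` converges, because `n.choose m` and `(n + 1) ^ m` are comparable for `n ≥ m`.
-/

open Finset

lemma sum_range_choose_eq_choose (n m : ℕ) :
    ∑ k ∈ range (n + 1), k.choose m = (n + 1).choose (m + 1) := by
  rw [← Nat.sum_Icc_choose]
  refine (sum_subset (fun k hk => ?_) fun k _ hk => ?_).symm
  · simp only [mem_Icc] at hk
    exact mem_range.2 (by omega)
  · simp only [mem_Icc, mem_range] at *
    exact Nat.choose_eq_zero_of_lt (by omega)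

section Cesaro

variable {K : Type*} [Field K]

def cesaro : (ℕ → K) →ₗ[K] (ℕ → K) where
  toFun y n := ((n : K) + 1)⁻¹ * ∑ k ∈ range (n + 1), y k
  map_add' y z := by ext n; simp [sum_add_distrib, mul_add]
  map_smul' c y := by ext n; simp [mul_sum, mul_left_comm]

lemma cesaro_apply (y : ℕ → K) (n : ℕ) :
    cesaro y n = ((n : K) + 1)⁻¹ * ∑ k ∈ range (n + 1), y k :=
  rfl

lemma cesaro_apply_of_forall_lt_eq_zero {y : ℕ → K} {n : ℕ} (h : ∀ k < n, y k = 0) :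
    cesaro y n = ((n : K) + 1)⁻¹ * y n := by
  rw [cesaro_apply, sum_range_succ, sum_eq_zero fun k hk => h k (mem_range.1 hk), zero_add]

lemma exists_eq_inv_of_cesaro_eq_smul {y : ℕ → K} {c : K} (hy : cesaro y = c • y) (hy0 : y ≠ 0) :
    ∃ m : ℕ, c = ((m : K) + 1)⁻¹ := by
  classical
  have hex : ∃ n, y n ≠ 0 := Function.ne_iff.1 hy0
  refine ⟨Nat.find hex, ?_⟩
  have hlt : ∀ k < Nat.find hex, y k = 0 := fun k hk => not_not.1 (Nat.find_min hex hk)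
  have h := congr_fun hy (Nat.find hex)
  rw [cesaro_apply_of_forall_lt_eq_zero hlt, Pi.smul_apply, smul_eq_mul] at h
  exact (mul_right_cancel₀ (Nat.find_spec hex) h).symm

variable [CharZero K]

lemma cesaro_choose (m : ℕ) :
    cesaro (fun n => (n.choose m : K)) = ((m : K) + 1)⁻¹ • fun n => (n.choose m : K) := by
  ext n
  have h : ((n : K) + 1) * n.choose m = (n + 1).choose (m + 1) * ((m : K) + 1) := by
    exact_mod_cast Nat.add_one_mul_choose_eq n m
  rw [cesaro_apply, ← Nat.cast_sum, sum_range_choose_eq_choose, Pi.smul_apply, smul_eq_mul]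
  field_simp
  linear_combination h.symm

lemma eq_smul_choose_of_cesaro_eq_smul {y : ℕ → K} {m : ℕ}
    (hy : cesaro y = ((m : K) + 1)⁻¹ • y) : y = y m • fun n => (n.choose m : K) := by
  set z := y - y m • fun n => (n.choose m : K) with hz_def
  have hz : cesaro z = ((m : K) + 1)⁻¹ • z := by
    rw [hz_def, map_sub, map_smul, hy, cesaro_choose, smul_sub, smul_comm]
  suffices ∀ n, z n = 0 from sub_eq_zero.1 (funext this)
  intro n
  induction n using Nat.strong_induction_on with
  | _ n ih =>
    have h := congr_fun hz n
    rw [cesaro_apply_of_forall_lt_eq_zero ih, Pi.smul_apply, smul_eq_mul] at h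
    obtain rfl | hn := eq_or_ne n m
    · simp [hz_def]
    · refine (mul_eq_mul_right_iff.1 h).resolve_left ?_
      simpa using hn

end Cesaro

lemma add_one_pow_le_mul_choose {m n : ℕ} (h : m ≤ n) :
    (n + 1) ^ m ≤ (m + 1) ^ m * m.factorial * n.choose m := by
  have hlin : n + 1 ≤ (m + 1) * (n + 1 - m) := by
    obtain ⟨k, rfl⟩ := Nat.exists_eq_add_of_le h
    rw [show m + k + 1 - m = k + 1 by omega]
    nlinarith
  calc (n + 1) ^ m ≤ ((m + 1) * (n + 1 - m)) ^ m := Nat.pow_le_pow_left hlin m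
    _ ≤ (m + 1) ^ m * n.descFactorial m := by
      rw [mul_pow]; exact Nat.mul_le_mul_left _ (Nat.pow_sub_le_descFactorial n m)
    _ = (m + 1) ^ m * m.factorial * n.choose m := by
      rw [Nat.descFactorial_eq_factorial_mul_choose, mul_assoc]

lemma summable_add_one_pow_mul_iff {a : ℕ → ℝ} (ha : ∀ n, 0 ≤ a n) (m : ℕ) :
    Summable (fun n : ℕ => ((n : ℝ) + 1) ^ m * a n) ↔
      Summable fun n => (n.choose m : ℝ) * a n := by
  constructor
  · refine fun h => h.of_nonneg_of_le (fun n => mul_nonneg (Nat.cast_nonneg _) (ha n)) fun n => ?_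
    refine mul_le_mul_of_nonneg_right ?_ (ha n)
    calc (n.choose m : ℝ) ≤ (n : ℝ) ^ m := by exact_mod_cast Nat.choose_le_pow n m
      _ ≤ ((n : ℝ) + 1) ^ m := by gcongr; linarith
  · intro h
    refine (h.mul_left (((m + 1) ^ m * m.factorial : ℕ) : ℝ)).of_norm_bounded_eventually_nat ?_
    filter_upwards [eventually_ge_atTop m] with n hn
    rw [Real.norm_of_nonneg (by have := ha n; positivity), ← mul_assoc]
    refine mul_le_mul_of_nonneg_right ?_ (ha n)
    exact_mod_cast add_one_pow_le_mul_choose hn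

lemma memℓp_one_weight_mul_choose_iff {w : ℕ → ℝ} (hw : ∀ n, 0 ≤ w n) (m : ℕ) :
    Memℓp (fun n => ((w n * n.choose m : ℝ) : ℂ)) 1 ↔
      Summable fun n : ℕ => ((n : ℝ) + 1) ^ m * w n := by
  rw [memℓp_gen_iff (by norm_num), summable_add_one_pow_mul_iff hw]
  simp only [ENNReal.toReal_one, Real.rpow_one, Complex.norm_real, Real.norm_eq_abs]
  refine summable_congr fun n => ?_
  rw [abs_of_nonneg (by have := hw n; positivity), mul_comm]

namespace IsCesaroOp

variable {w : ℕ → ℝ} {T : ellOne →L[ℂ] ellOne}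

lemma apply_eq (hT : IsCesaroOp w w T) (x : ellOne) (n : ℕ) :
    (T x : ℕ → ℂ) n = w n * cesaro (fun k => (x : ℕ → ℂ) k / w k) n := by
  rw [hT, cesaro_apply]
  push_cast
  ring

lemma eq_smul_iff (hT : IsCesaroOp w w T) (hw : ∀ n, (w n : ℂ) ≠ 0) (x : ellOne) (c : ℂ) :
    T x = c • x ↔
      cesaro (fun n => (x : ℕ → ℂ) n / w n) = c • fun n => (x : ℕ → ℂ) n / w n := by
  rw [lp.ext_iff, lp.coeFn_smul, funext_iff, funext_iff]
  refine forall_congr' fun n => ?_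
  rw [hT.apply_eq, Pi.smul_apply, Pi.smul_apply, smul_eq_mul, smul_eq_mul, ← mul_div_assoc,
    eq_div_iff (hw n), mul_comm]

lemma memℓp_weight_mul_choose_of_eq_smul (hT : IsCesaroOp w w T) (hw : ∀ n, (w n : ℂ) ≠ 0)
    {x : ellOne} (hx0 : x ≠ 0) {c : ℂ} (hx : T x = c • x) :
    ∃ m : ℕ, c = ((m : ℂ) + 1)⁻¹ ∧ Memℓp (fun n => ((w n * n.choose m : ℝ) : ℂ)) 1 := by
  set y : ℕ → ℂ := fun n => (x : ℕ → ℂ) n / w n with hy_def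
  have hy := (hT.eq_smul_iff hw x c).1 hx
  have hy0 : y ≠ 0 := fun h => hx0 <| lp.ext <| funext fun n => by
    simpa [hy_def, hw n] using congr_fun h n
  obtain ⟨m, rfl⟩ := exists_eq_inv_of_cesaro_eq_smul hy hy0
  have hym : y = y m • fun n => (n.choose m : ℂ) := eq_smul_choose_of_cesaro_eq_smul hy
  have hym0 : y m ≠ 0 := fun h => hy0 (by rw [hym, h, zero_smul])
  have hx_eq : ∀ n, (x : ℕ → ℂ) n = y m * ((w n * n.choose m : ℝ) : ℂ) := fun n => by
    have := congr_fun hym n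
    rw [Pi.smul_apply, smul_eq_mul, hy_def, div_eq_iff (hw n)] at this
    rw [this]; push_cast; ring
  refine ⟨m, rfl, ?_⟩
  convert (lp.memℓp x).const_smul (y m)⁻¹ using 1
  funext n
  rw [Pi.smul_apply, hx_eq, smul_eq_mul, inv_mul_cancel_left₀ hym0]

end IsCesaroOp

theorem eigenvalue_characterization_general (w : ℕ → ℝ)
    (hw : ∀ n, 0 < w n)
    (T : ellOne →L[ℂ] ellOne) (hT : IsCesaroOp w w T) (lam : ℂ) :
    (∃ x : ellOne, x ≠ 0 ∧ T x = lam • x) ↔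
      ∃ m : ℕ, lam = ((m : ℂ) + 1)⁻¹ ∧
        Summable fun n : ℕ => ((n : ℝ) + 1) ^ m * w n := by
  have hw0 : ∀ n, (w n : ℂ) ≠ 0 := fun n => Complex.ofReal_ne_zero.2 (hw n).ne'
  constructor
  · rintro ⟨x, hx0, hx⟩
    obtain ⟨m, rfl, hmem⟩ := hT.memℓp_weight_mul_choose_of_eq_smul hw0 hx0 hx
    exact ⟨m, rfl, (memℓp_one_weight_mul_choose_iff (fun n => (hw n).le) m).1 hmem⟩
  · rintro ⟨m, rfl, hsum⟩
    have hmem := (memℓp_one_weight_mul_choose_iff (fun n => (hw n).le) m).2 hsum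
    refine ⟨⟨_, hmem⟩, fun h => ?_, (hT.eq_smul_iff hw0 _ _).2 ?_⟩
    · simpa [(hw m).ne'] using congr_arg (fun x : ellOne => (x : ℕ → ℂ) m) h
    · convert cesaro_choose (K := ℂ) m using 3 <;> simp [hw0]

theorem eigenvalue_characterization (w : ℕ → ℝ)
    (hw : ∀ n, 0 < w n) (hwb : ∃ C, ∀ n, w n ≤ C)
    (hM : Mvw w w ≠ ⊤)
    (T : ellOne →L[ℂ] ellOne) (hT : IsCesaroOp w w T) (lam : ℂ) :
    (∃ x : ellOne, x ≠ 0 ∧ T x = lam • x) ↔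
      ∃ m : ℕ, lam = ((m : ℂ) + 1)⁻¹ ∧
        Summable fun n : ℕ => ((n : ℝ) + 1) ^ m * w n :=
  eigenvalue_characterization_general w hw T hT lam
end
end

section
/- Let w be a weight with M_w < ∞, let T : ℓ¹ → ℓ¹ be the continuous linear operator satisfying (T x)(n) = (w(n)/n) ∑_{k=1}^n x(k)/w(k) for all x ∈ ℓ¹ and n ≥ 1, and suppose S_w(1) := {s ∈ ℝ : sup_{n≥1} 1/(n^s w(n)) < ∞} is nonempty; set s₁ := inf S_w(1). Then: (i) necessarily s₁ > 0; (ii) the closed disc {λ ∈ ℂ : |λ − 1/(2s₁)| ≤ 1/(2s₁)} together with {1/m : m ∈ ℕ, m ≥ 1} is contained in σ(T), the spectrum of T. -/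
-- Index `n : ℕ` corresponds to the paper's `n+1`.

open Filter Topology

noncomputable section

def Sset (w : ℕ → ℝ) : Set ℝ :=
  {s : ℝ | BddAbove (Set.range fun n : ℕ => 1 / (((n : ℝ) + 1) ^ s * w n))}

/-!
For `Re a > 0` the sequence `ψ_a(k) = ∏_{j<k} (1 - a/(j+1))` satisfies
`∑_{n≥k} ψ_a(n)/(n+1) = ψ_a(k)/a` and decays like `(k+1)^(-Re a)`. Hence, whenever `ψ_a/w` is
bounded, the functional `x ↦ ∑ ψ_a(n)/w(n) · x(n)` on `ℓ¹` is an eigenvector of the adjoint of `T`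
for the eigenvalue `1/a`, so `1/a ∈ σ(T)`. For `μ` in the open disc, `Re(1/μ) > s₁`, and any
`s ∈ S_w(1)` with `s < Re(1/μ)` bounds `ψ_{1/μ}/w`; for `a = m`, `ψ_m` vanishes from index `m` on.
The closed disc follows because the spectrum is closed.

Finally `s₁ ≥ 1/M > 0`: the tails `t(n) = ∑_{m≥n} w(m)/(m+1)` satisfy
`t(n+1) ≤ (1 - 1/(M(n+1))) t(n)`, so `t(n) = O((n+1)^(-1/M))`, while `s ∈ S_w(1)` forces
`t(n) ≥ c (n+1)^(-s)`.
-/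

open Finset
open scoped ENNReal

lemma hasSum_sub_succ_of_tendsto_zero {G : Type*} [AddCommGroup G] [TopologicalSpace G]
    [IsTopologicalAddGroup G] [T2Space G] {f : ℕ → G} (hs : Summable fun n => f n - f (n + 1))
    (hf : Tendsto f atTop (𝓝 0)) : HasSum (fun n => f n - f (n + 1)) (f 0) := by
  convert hs.hasSum
  refine tendsto_nhds_unique ?_ hs.hasSum.tendsto_sum_nat
  simp_rw [sum_range_sub']
  simpa using tendsto_const_nhds.sub hf

lemma tsum_sum_range_mul_eq_tsum_mul_tsum_add {𝕜 : Type*} [NormedDivisionRing 𝕜]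
    [CompleteSpace 𝕜] {X c : ℕ → 𝕜} (h : Summable fun p : ℕ × ℕ => X p.1 * c (p.1 + p.2)) :
    ∑' n, (∑ k ∈ range (n + 1), X k) * c n = ∑' k, X k * ∑' j, c (k + j) := by
  have hsigma := (HasAntidiagonal.sigmaAntidiagonalEquivProd (A := ℕ)).summable_iff.mpr h
  calc ∑' n, (∑ k ∈ range (n + 1), X k) * c n
      = ∑' n, ∑ kl ∈ antidiagonal n, X kl.1 * c (kl.1 + kl.2) := by
        refine tsum_congr fun n => ?_
        rw [Nat.sum_antidiagonal_eq_sum_range_succ_mk, sum_mul]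
        exact sum_congr rfl fun k hk => by rw [Nat.add_sub_cancel' (mem_range_succ_iff.1 hk)]
    _ = ∑' p : ℕ × ℕ, X p.1 * c (p.1 + p.2) := by
        rw [← HasAntidiagonal.sigmaAntidiagonalEquivProd.tsum_eq]
        exact (hsigma.tsum_sigma.trans (tsum_congr fun n =>
          Finset.tsum_subtype (antidiagonal n) fun kl : ℕ × ℕ => X kl.1 * c (kl.1 + kl.2))).symm
    _ = ∑' k, ∑' j, X k * c (k + j) := h.tsum_prod
    _ = ∑' k, X k * ∑' j, c (k + j) := tsum_congr fun k => tsum_mul_left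

section Spectrum

variable {𝕜 E F : Type*} [NormedField 𝕜] [NormedAddCommGroup E] [NormedSpace 𝕜 E]
  [AddCommGroup F] [Module 𝕜 F]

lemma mem_spectrum_of_linearMap_comp_eq_smul (T : E →L[𝕜] E) {f : E →ₗ[𝕜] F} (hf : f ≠ 0)
    {lam : 𝕜} (hfT : ∀ x, f (T x) = lam • f x) : lam ∈ spectrum 𝕜 T := by
  rw [spectrum.mem_iff]
  intro hunit
  obtain ⟨S, hS⟩ := hunit.exists_right_inv
  refine hf (LinearMap.ext fun y => ?_)
  have hy : lam • S y - T (S y) = y := by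
    simpa [Algebra.algebraMap_eq_smul_one] using congr($hS y)
  rw [← hy, map_sub, map_smul, hfT, sub_self, LinearMap.zero_apply]

end Spectrum

section Pairing

lemma summable_norm_lp_one {ι E : Type*} [NormedAddCommGroup E] (x : lp (fun _ : ι => E) 1) :
    Summable fun i => ‖x i‖ := by
  simpa using (lp.memℓp x).summable (by simp)

variable {ι 𝕜 : Type*} [NormedField 𝕜] [CompleteSpace 𝕜]

lemma summable_lp_top_mul_lp_one (φ : lp (fun _ : ι => 𝕜) ∞) (x : lp (fun _ : ι => 𝕜) 1) :
    Summable fun i => φ i * x i := by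
  refine Summable.of_norm_bounded ((summable_norm_lp_one x).mul_left ‖φ‖) fun i => ?_
  rw [norm_mul]
  exact mul_le_mul_of_nonneg_right (lp.norm_apply_le_norm (by simp) φ i) (norm_nonneg _)

def lpTopPairing (φ : lp (fun _ : ι => 𝕜) ∞) : lp (fun _ : ι => 𝕜) 1 →ₗ[𝕜] 𝕜 where
  toFun x := ∑' i, φ i * x i
  map_add' x y := by
    simp only [lp.coeFn_add, Pi.add_apply, mul_add]
    exact (summable_lp_top_mul_lp_one φ x).tsum_add (summable_lp_top_mul_lp_one φ y)
  map_smul' c x := by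
    simp only [lp.coeFn_smul, Pi.smul_apply, smul_eq_mul, RingHom.id_apply, ← tsum_mul_left]
    exact tsum_congr fun i => mul_left_comm _ _ _

lemma lpTopPairing_apply (φ : lp (fun _ : ι => 𝕜) ∞) (x : lp (fun _ : ι => 𝕜) 1) :
    lpTopPairing φ x = ∑' i, φ i * x i :=
  rfl

lemma lpTopPairing_single [DecidableEq ι] (φ : lp (fun _ : ι => 𝕜) ∞) (i : ι) (c : 𝕜) :
    lpTopPairing φ (lp.single 1 i c) = φ i * c := by
  rw [lpTopPairing_apply, tsum_eq_single i fun j hj => by simp [hj],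
    lp.single_apply_self]

end Pairing

lemma le_of_forall_rpow_le_mul_rpow {p q K : ℝ}
    (h : ∀ n : ℕ, ((n : ℝ) + 1) ^ p ≤ K * ((n : ℝ) + 1) ^ q) : p ≤ q := by
  by_contra! hqp
  have htend : Tendsto (fun n : ℕ => ((n : ℝ) + 1) ^ (p - q)) atTop atTop :=
    (tendsto_rpow_atTop (sub_pos.2 hqp)).comp
      (tendsto_atTop_add_const_right atTop 1 tendsto_natCast_atTop_atTop)
  obtain ⟨n, hn⟩ := (htend.eventually_gt_atTop K).exists
  rw [Real.rpow_sub (by positivity), lt_div_iff₀ (by positivity)] at hn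
  linarith [h n]

lemma norm_one_sub_mul_ofReal_le (a : ℂ) (u : ℝ) :
    ‖1 - a * u‖ ≤ Real.exp (-(a.re * u) + ‖a‖ ^ 2 * u ^ 2 / 2) := by
  rw [← sq_le_sq₀ (norm_nonneg _) (Real.exp_pos _).le, ← Real.exp_nat_mul]
  have hsq : ‖1 - a * u‖ ^ 2 = (-(2 * a.re * u) + ‖a‖ ^ 2 * u ^ 2) + 1 := by
    rw [Complex.sq_norm, Complex.normSq_apply, ← Complex.normSq_eq_norm_sq, Complex.normSq_apply]
    simp only [Complex.sub_re, Complex.sub_im, Complex.mul_re, Complex.mul_im, Complex.ofReal_re,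
      Complex.ofReal_im, Complex.one_re, Complex.one_im]
    ring
  rw [hsq]
  refine (Real.add_one_le_exp _).trans_eq ?_
  congr 1
  push_cast
  ring

lemma summable_one_div_add_one_sq : Summable fun j : ℕ => 1 / ((j : ℝ) + 1) ^ 2 := by
  have := (summable_nat_add_iff 1).2 (Real.summable_one_div_nat_pow.2 one_lt_two)
  exact_mod_cast this

/-- For `Re a > 0`, `k ↦ cesaroDualEigen a k / w k` is an eigenvector of the adjoint of `T` for
the eigenvalue `a⁻¹`. -/
def cesaroDualEigen (a : ℂ) (k : ℕ) : ℂ := ∏ j ∈ range k, (1 - a / ((j : ℂ) + 1))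

namespace cesaroDualEigen

lemma succ (a : ℂ) (k : ℕ) :
    cesaroDualEigen a (k + 1) = cesaroDualEigen a k * (1 - a / ((k : ℂ) + 1)) :=
  prod_range_succ _ _

lemma sub_succ (a : ℂ) (k : ℕ) :
    cesaroDualEigen a k - cesaroDualEigen a (k + 1)
      = a * (cesaroDualEigen a k / ((k : ℂ) + 1)) := by
  rw [succ]
  ring

lemma natCast_eq_zero {m k : ℕ} (hm : m ≠ 0) (hk : m ≤ k) : cesaroDualEigen m k = 0 := by
  refine prod_eq_zero (i := m - 1) (mem_range.2 (by omega)) ?_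
  rw [Nat.cast_pred (Nat.pos_of_ne_zero hm), sub_add_cancel, div_self (Nat.cast_ne_zero.2 hm),
    sub_self]

lemma norm_le (a : ℂ) (ha : 0 ≤ a.re) :
    ∃ C, ∀ k : ℕ, ‖cesaroDualEigen a k‖ ≤ C * ((k : ℝ) + 1) ^ (-a.re) := by
  set S := ∑' j : ℕ, 1 / ((j : ℝ) + 1) ^ 2
  refine ⟨Real.exp (‖a‖ ^ 2 * S / 2), fun k => ?_⟩
  have hlog : Real.log ((k : ℝ) + 1) ≤ ∑ j ∈ range k, 1 / ((j : ℝ) + 1) := by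
    simpa [harmonic] using log_add_one_le_harmonic k
  have hS : ∑ j ∈ range k, 1 / ((j : ℝ) + 1) ^ 2 ≤ S :=
    summable_one_div_add_one_sq.sum_le_tsum _ fun _ _ => by positivity
  calc ‖cesaroDualEigen a k‖
      = ∏ j ∈ range k, ‖1 - a * ((1 / ((j : ℝ) + 1) : ℝ) : ℂ)‖ := by
        rw [cesaroDualEigen, norm_prod]
        push_cast
        simp only [div_eq_mul_one_div a]
    _ ≤ ∏ j ∈ range k,
          Real.exp (-(a.re * (1 / ((j : ℝ) + 1))) + ‖a‖ ^ 2 * (1 / ((j : ℝ) + 1)) ^ 2 / 2) :=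
        prod_le_prod (fun _ _ => norm_nonneg _) fun j _ => norm_one_sub_mul_ofReal_le _ _
    _ = Real.exp (-(a.re * ∑ j ∈ range k, 1 / ((j : ℝ) + 1))
          + ‖a‖ ^ 2 * (∑ j ∈ range k, 1 / ((j : ℝ) + 1) ^ 2) / 2) := by
        rw [← Real.exp_sum, sum_add_distrib, sum_neg_distrib, mul_sum, mul_sum, sum_div]
        simp only [div_pow, one_pow]
    _ ≤ Real.exp (-(a.re * Real.log ((k : ℝ) + 1)) + ‖a‖ ^ 2 * S / 2) := by
        gcongr
    _ = Real.exp (‖a‖ ^ 2 * S / 2) * ((k : ℝ) + 1) ^ (-a.re) := by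
        rw [Real.rpow_def_of_pos (by positivity), ← Real.exp_add]
        ring_nf

lemma tendsto_zero {a : ℂ} (ha : 0 < a.re) : Tendsto (cesaroDualEigen a) atTop (𝓝 0) := by
  obtain ⟨C, hC⟩ := norm_le a ha.le
  have hrpow : Tendsto (fun k : ℕ => ((k : ℝ) + 1) ^ (-a.re)) atTop (𝓝 0) :=
    (tendsto_rpow_neg_atTop ha).comp
      (tendsto_atTop_add_const_right atTop 1 tendsto_natCast_atTop_atTop)
  exact squeeze_zero_norm hC (by simpa using hrpow.const_mul C)

lemma summable_div {a : ℂ} (ha : 0 < a.re) :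
    Summable fun n : ℕ => cesaroDualEigen a n / ((n : ℂ) + 1) := by
  obtain ⟨C, hC⟩ := norm_le a ha.le
  have hsum : Summable fun n : ℕ => C * ((n : ℝ) + 1) ^ (-a.re - 1) := by
    have := (summable_nat_add_iff 1).2 (Real.summable_nat_rpow.2 (by linarith : -a.re - 1 < -1))
    exact_mod_cast this.mul_left C
  refine Summable.of_norm_bounded hsum fun n => ?_
  have hn : (0 : ℝ) < (n : ℝ) + 1 := by positivity
  rw [norm_div, ← Nat.cast_add_one, Complex.norm_natCast, Nat.cast_add_one,
    Real.rpow_sub_one hn.ne', mul_div_assoc', div_le_div_iff_of_pos_right hn]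
  exact hC n

lemma hasSum_tail {a : ℂ} (ha : 0 < a.re) (k : ℕ) :
    HasSum (fun j => cesaroDualEigen a (k + j) / (((k + j : ℕ) : ℂ) + 1))
      (a⁻¹ * cesaroDualEigen a k) := by
  have ha0 : a ≠ 0 := fun h => by simp [h] at ha
  have hterm : ∀ j, cesaroDualEigen a (k + j) / (((k + j : ℕ) : ℂ) + 1)
      = a⁻¹ * cesaroDualEigen a (k + j) - a⁻¹ * cesaroDualEigen a (k + (j + 1)) := by
    intro j
    rw [← mul_sub, ← add_assoc, sub_succ, inv_mul_cancel_left₀ ha0]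
  simp_rw [hterm]
  refine hasSum_sub_succ_of_tendsto_zero ?_ ?_
  · refine ((summable_nat_add_iff (G := ℂ) k).2 (summable_div ha)).congr fun j => ?_
    rw [← hterm, add_comm j k]
  · have hshift : Tendsto (fun j => k + j) atTop atTop :=
      tendsto_atTop_mono (fun j => Nat.le_add_left j k) tendsto_id
    simpa using ((tendsto_zero ha).comp hshift).const_mul a⁻¹

end cesaroDualEigen

def weightTail (w : ℕ → ℝ) (n : ℕ) : ℝ := ∑' k, w (n + k) / (((n + k : ℕ) : ℝ) + 1)

lemma summable_and_exists_weightTail_le_of_Mvw_ne_top {v w : ℕ → ℝ} (hv : ∀ n, 0 < v n)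
    (hw : ∀ n, 0 ≤ w n) (hM : Mvw v w ≠ ⊤) :
    Summable (fun m => w m / ((m : ℝ) + 1)) ∧ ∃ M, ∀ n, weightTail w n ≤ M * v n := by
  have hterm : ∀ n k : ℕ, w (n + k) / ((n : ℝ) + k + 1) = w (n + k) / (((n + k : ℕ) : ℝ) + 1) :=
    fun n k => by push_cast; rfl
  have key : ∀ n, Summable (fun k => w (n + k) / (((n + k : ℕ) : ℝ) + 1)) ∧
      weightTail w n ≤ (Mvw v w).toReal * v n := by
    intro n
    have hle : ENNReal.ofReal (1 / v n) *
        ∑' k, ENNReal.ofReal (w (n + k) / (((n + k : ℕ) : ℝ) + 1)) ≤ Mvw v w := by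
      simpa only [Mvw, hterm] using le_iSup (fun n : ℕ => ENNReal.ofReal (1 / v n) *
        ∑' k : ℕ, ENNReal.ofReal (w (n + k) / (n + k + 1))) n
    have hnonneg : ∀ k, 0 ≤ w (n + k) / (((n + k : ℕ) : ℝ) + 1) :=
      fun k => div_nonneg (hw _) (by positivity)
    have hfin : ∑' k, ENNReal.ofReal (w (n + k) / (((n + k : ℕ) : ℝ) + 1)) ≠ ⊤ := by
      intro htop
      rw [htop, ENNReal.mul_top (by simpa using hv n)] at hle
      exact hM (top_le_iff.1 hle)
    have hsum := (ENNReal.summable_toReal hfin).congr fun k => ENNReal.toReal_ofReal (hnonneg k)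
    refine ⟨hsum, ?_⟩
    rw [← ENNReal.ofReal_tsum_of_nonneg hnonneg hsum,
      ← ENNReal.ofReal_mul (by simpa using (hv n).le), ENNReal.ofReal_le_iff_le_toReal hM, one_div,
      inv_mul_le_iff₀ (hv n)] at hle
    rwa [mul_comm] at hle
  exact ⟨by simpa using (key 0).1, _, fun n => (key n).2⟩

section WeightTail

variable {w : ℕ → ℝ}

lemma summable_weightTail_term (hsum : Summable fun m => w m / ((m : ℝ) + 1)) (n : ℕ) :
    Summable fun k => w (n + k) / (((n + k : ℕ) : ℝ) + 1) := by
  simpa only [add_comm n] using (summable_nat_add_iff (G := ℝ) n).2 hsum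

lemma weightTail_nonneg (hw : ∀ n, 0 ≤ w n) (n : ℕ) : 0 ≤ weightTail w n :=
  tsum_nonneg fun k => div_nonneg (hw _) (by positivity)

lemma weightTail_eq_add (hsum : Summable fun m => w m / ((m : ℝ) + 1)) (n : ℕ) :
    weightTail w n = w n / ((n : ℝ) + 1) + weightTail w (n + 1) := by
  rw [weightTail, (summable_weightTail_term hsum n).tsum_eq_zero_add, add_zero, weightTail]
  congr 1
  exact tsum_congr fun k => by rw [Nat.add_right_comm, add_assoc]

lemma weightTail_le_mul_norm_cesaroDualEigen (hw : ∀ n, 0 ≤ w n)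
    (hsum : Summable fun m => w m / ((m : ℝ) + 1)) {M : ℝ} (hM : 0 < M)
    (htail : ∀ n, weightTail w n ≤ M * w n) (n : ℕ) :
    weightTail w n ≤ weightTail w 0 * ‖cesaroDualEigen (M⁻¹ : ℝ) n‖ := by
  induction n with
  | zero => simp [cesaroDualEigen]
  | succ n ih =>
    have hfactor : 1 - M⁻¹ / ((n : ℝ) + 1) ≤ ‖1 - ((M⁻¹ : ℝ) : ℂ) / ((n : ℂ) + 1)‖ := by
      have hcast : 1 - ((M⁻¹ : ℝ) : ℂ) / ((n : ℂ) + 1) = ((1 - M⁻¹ / ((n : ℝ) + 1) : ℝ) : ℂ) := by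
        push_cast
        ring
      rw [hcast, Complex.norm_real]
      exact Real.le_norm_self _
    have hstep : weightTail w (n + 1)
        ≤ weightTail w n * ‖1 - ((M⁻¹ : ℝ) : ℂ) / ((n : ℂ) + 1)‖ :=
      calc weightTail w (n + 1) = weightTail w n - w n / ((n : ℝ) + 1) := by
            rw [weightTail_eq_add hsum n]
            ring
        _ ≤ weightTail w n - weightTail w n * M⁻¹ / ((n : ℝ) + 1) := by
            gcongr
            rw [mul_inv_le_iff₀ hM]
            linarith [htail n]
        _ = weightTail w n * (1 - M⁻¹ / ((n : ℝ) + 1)) := by ring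
        _ ≤ _ := mul_le_mul_of_nonneg_left hfactor (weightTail_nonneg hw n)
    rw [cesaroDualEigen.succ, norm_mul, ← mul_assoc]
    exact hstep.trans (mul_le_mul_of_nonneg_right ih (norm_nonneg _))

lemma rpow_neg_le_mul_weightTail (hw : ∀ n, 0 ≤ w n)
    (hsum : Summable fun m => w m / ((m : ℝ) + 1)) {s B : ℝ} (hs : -1 ≤ s) (hB0 : 0 ≤ B)
    (hB : ∀ n : ℕ, ((n : ℝ) + 1) ^ (-s) ≤ B * w n) (n : ℕ) :
    (2 : ℝ) ^ (-s - 1) * ((n : ℝ) + 1) ^ (-s) ≤ B * weightTail w n := by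
  have hn : (0 : ℝ) < (n : ℝ) + 1 := by positivity
  calc (2 : ℝ) ^ (-s - 1) * ((n : ℝ) + 1) ^ (-s)
      = ∑ _j ∈ range (n + 1), (2 * ((n : ℝ) + 1)) ^ (-s - 1) := by
        rw [sum_const, card_range, nsmul_eq_mul, Real.mul_rpow zero_le_two hn.le,
          Real.rpow_sub_one hn.ne']
        field_simp
        push_cast
        ring
    _ ≤ ∑ j ∈ range (n + 1), (((n + j : ℕ) : ℝ) + 1) ^ (-s - 1) := by
        refine sum_le_sum fun j hj => Real.rpow_le_rpow_of_nonpos (by positivity) ?_ (by linarith)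
        have : (j : ℝ) ≤ n := by exact_mod_cast mem_range_succ_iff.1 hj
        push_cast
        linarith
    _ ≤ ∑ j ∈ range (n + 1), B * (w (n + j) / (((n + j : ℕ) : ℝ) + 1)) := by
        refine sum_le_sum fun j _ => ?_
        rw [Real.rpow_sub_one (by positivity), mul_div_assoc']
        exact div_le_div_of_nonneg_right (hB _) (by positivity)
    _ ≤ B * weightTail w n := by
        rw [← mul_sum]
        exact mul_le_mul_of_nonneg_left ((summable_weightTail_term hsum n).sum_le_tsum _
          fun k _ => div_nonneg (hw _) (by positivity)) hB0

lemma pos_of_weightTail_le_mul (hw : ∀ n, 0 < w n) (hsum : Summable fun m => w m / ((m : ℝ) + 1))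
    {M : ℝ} (htail : ∀ n, weightTail w n ≤ M * w n) : 0 < M := by
  have h0 : w 0 ≤ weightTail w 0 := by
    simpa using (le_add_of_nonneg_right (weightTail_nonneg (fun n => (hw n).le) 1)).trans_eq
      (weightTail_eq_add hsum 0).symm
  exact pos_of_mul_pos_left ((hw 0).trans_le (h0.trans (htail 0))) (hw 0).le

end WeightTail

section Sset

variable {w : ℕ → ℝ}

lemma mem_Sset_of_le (hw : ∀ n, 0 < w n) {s t : ℝ} (hs : s ∈ Sset w) (hst : s ≤ t) :
    t ∈ Sset w := by
  obtain ⟨B, hB⟩ := hs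
  refine ⟨B, Set.forall_mem_range.2 fun n => le_trans ?_ (hB (Set.mem_range_self n))⟩
  have h1 : (1 : ℝ) ≤ (n : ℝ) + 1 := by simp
  exact one_div_le_one_div_of_le (by have := hw n; positivity)
    (mul_le_mul_of_nonneg_right (Real.rpow_le_rpow_of_exponent_le h1 hst) (hw n).le)

lemma exists_rpow_neg_le_of_mem_Sset (hw : ∀ n, 0 < w n) {s : ℝ} (hs : s ∈ Sset w) :
    ∃ B, 0 < B ∧ ∀ n : ℕ, ((n : ℝ) + 1) ^ (-s) ≤ B * w n := by
  obtain ⟨B, hB⟩ := hs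
  have hle : ∀ n : ℕ, ((n : ℝ) + 1) ^ (-s) ≤ B * w n := fun n => by
    have := hB (Set.mem_range_self n)
    rwa [one_div, mul_inv, ← div_eq_mul_inv, div_le_iff₀ (hw n), ← Real.rpow_neg (by positivity)]
      at this
  exact ⟨B, pos_of_mul_pos_left ((by positivity : (0 : ℝ) < _).trans_le (hle 0)) (hw 0).le, hle⟩

lemma inv_le_of_mem_Sset (hw : ∀ n, 0 < w n) (hsum : Summable fun m => w m / ((m : ℝ) + 1))
    {M : ℝ} (hM : 0 < M) (htail : ∀ n, weightTail w n ≤ M * w n) {s : ℝ} (hs : s ∈ Sset w) :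
    M⁻¹ ≤ s := by
  suffices key : ∀ s ∈ Sset w, 0 ≤ s → M⁻¹ ≤ s by
    exact (le_max_iff.1 (key _ (mem_Sset_of_le hw hs (le_max_left s 0)) (le_max_right s 0))
      ).resolve_right (not_le.2 (inv_pos.2 hM))
  intro s hs hs0
  obtain ⟨B, hB0, hB⟩ := exists_rpow_neg_le_of_mem_Sset hw hs
  obtain ⟨C, hC⟩ := cesaroDualEigen.norm_le (M⁻¹ : ℝ) (by simp [hM.le])
  have hw0 : ∀ n, 0 ≤ w n := fun n => (hw n).le
  refine neg_le_neg_iff.1 (le_of_forall_rpow_le_mul_rpow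
    (K := B * weightTail w 0 * C / 2 ^ (-s - 1)) fun n => ?_)
  have hlow := rpow_neg_le_mul_weightTail hw0 hsum (by linarith) hB0.le hB n
  have hup := weightTail_le_mul_norm_cesaroDualEigen hw0 hsum hM htail n
  have hCn : ‖cesaroDualEigen (M⁻¹ : ℝ) n‖ ≤ C * ((n : ℝ) + 1) ^ (-M⁻¹) := by simpa using hC n
  calc ((n : ℝ) + 1) ^ (-s) ≤ B * weightTail w n / 2 ^ (-s - 1) :=
        (le_div_iff₀' (by positivity)).2 hlow
    _ ≤ B * (weightTail w 0 * (C * ((n : ℝ) + 1) ^ (-M⁻¹))) / 2 ^ (-s - 1) := by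
        gcongr
        exact hup.trans (mul_le_mul_of_nonneg_left hCn (weightTail_nonneg hw0 0))
    _ = B * weightTail w 0 * C / 2 ^ (-s - 1) * ((n : ℝ) + 1) ^ (-M⁻¹) := by ring

end Sset

lemma tsum_cesaroDualEigen_div_mul_apply {w : ℕ → ℝ} (hw : ∀ n, 0 < w n)
    (hsum : Summable fun m => w m / ((m : ℝ) + 1)) {M : ℝ}
    (htail : ∀ n, weightTail w n ≤ M * w n) {T : ellOne →L[ℂ] ellOne} (hT : IsCesaroOp w w T)
    {a : ℂ} (ha : 0 < a.re) {B : ℝ} (hB : ∀ k, ‖cesaroDualEigen a k‖ ≤ B * w k) (x : ellOne) :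
    ∑' n, cesaroDualEigen a n / (w n : ℂ) * T x n
      = a⁻¹ * ∑' n, cesaroDualEigen a n / (w n : ℂ) * x n := by
  set X : ℕ → ℂ := fun k => x k / (w k : ℂ)
  set c : ℕ → ℂ := fun n => cesaroDualEigen a n / ((n : ℂ) + 1)
  have hwC : ∀ n, (w n : ℂ) ≠ 0 := fun n => Complex.ofReal_ne_zero.2 (hw n).ne'
  have hB0 : 0 ≤ B := nonneg_of_mul_nonneg_left ((norm_nonneg _).trans (hB 0)) (hw 0)
  have hnormX : ∀ k, ‖X k‖ * w k = ‖x k‖ := fun k => by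
    rw [norm_div, Complex.norm_real, Real.norm_of_nonneg (hw k).le, div_mul_cancel₀ _ (hw k).ne']
  have hc : ∀ k j, ‖c (k + j)‖ ≤ B * (w (k + j) / (((k + j : ℕ) : ℝ) + 1)) := fun k j => by
    rw [norm_div, ← Nat.cast_add_one, Complex.norm_natCast, Nat.cast_add_one, mul_div_assoc']
    exact div_le_div_of_nonneg_right (hB _) (by positivity)
  have hrow : ∀ k, Summable fun j => ‖c (k + j)‖ := fun k =>
    Summable.of_nonneg_of_le (fun _ => norm_nonneg _) (hc k)
      ((summable_weightTail_term hsum k).mul_left B)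
  have hrow_le : ∀ k, ∑' j, ‖c (k + j)‖ ≤ B * M * w k := fun k =>
    calc ∑' j, ‖c (k + j)‖ ≤ B * weightTail w k := by
          rw [weightTail, ← tsum_mul_left]
          exact (hrow k).tsum_le_tsum (hc k) ((summable_weightTail_term hsum k).mul_left B)
      _ ≤ B * M * w k := by rw [mul_assoc]; exact mul_le_mul_of_nonneg_left (htail k) hB0
  have hF : Summable fun p : ℕ × ℕ => X p.1 * c (p.1 + p.2) := by
    refine Summable.of_norm ((summable_prod_of_nonneg fun _ => norm_nonneg _).2 ⟨fun k => ?_, ?_⟩)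
    · simpa only [norm_mul] using (hrow k).mul_left ‖X k‖
    · refine Summable.of_nonneg_of_le (fun _ => tsum_nonneg fun _ => norm_nonneg _) (fun k => ?_)
        ((summable_norm_lp_one x).mul_left (B * M))
      simp only [norm_mul, tsum_mul_left]
      calc ‖X k‖ * ∑' j, ‖c (k + j)‖ ≤ ‖X k‖ * (B * M * w k) :=
            mul_le_mul_of_nonneg_left (hrow_le k) (norm_nonneg _)
        _ = B * M * ‖x k‖ := by rw [← hnormX]; ring
  calc ∑' n, cesaroDualEigen a n / (w n : ℂ) * T x n
      = ∑' n, (∑ k ∈ range (n + 1), X k) * c n := tsum_congr fun n => by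
        rw [hT x n]
        field_simp [hwC n]
        push_cast
        ring
    _ = ∑' k, X k * ∑' j, c (k + j) := tsum_sum_range_mul_eq_tsum_mul_tsum_add hF
    _ = ∑' k, a⁻¹ * (cesaroDualEigen a k / (w k : ℂ) * x k) := tsum_congr fun k => by
        rw [(cesaroDualEigen.hasSum_tail ha k).tsum_eq]
        ring
    _ = a⁻¹ * ∑' n, cesaroDualEigen a n / (w n : ℂ) * x n := tsum_mul_left

lemma inv_mem_spectrum_of_norm_cesaroDualEigen_le {w : ℕ → ℝ} (hw : ∀ n, 0 < w n)
    (hsum : Summable fun m => w m / ((m : ℝ) + 1)) {M : ℝ}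
    (htail : ∀ n, weightTail w n ≤ M * w n) {T : ellOne →L[ℂ] ellOne} (hT : IsCesaroOp w w T)
    {a : ℂ} (ha : 0 < a.re) {B : ℝ} (hB : ∀ k, ‖cesaroDualEigen a k‖ ≤ B * w k) :
    a⁻¹ ∈ spectrum ℂ T := by
  have hφ : Memℓp (fun k => cesaroDualEigen a k / (w k : ℂ)) ∞ :=
    memℓp_infty ⟨B, Set.forall_mem_range.2 fun k => by
      rw [norm_div, Complex.norm_real, Real.norm_of_nonneg (hw k).le, div_le_iff₀ (hw k)]
      exact hB k⟩
  refine mem_spectrum_of_linearMap_comp_eq_smul T (f := lpTopPairing ⟨_, hφ⟩) (fun h => ?_)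
    fun x => tsum_cesaroDualEigen_div_mul_apply hw hsum htail hT ha hB x
  have h0 := LinearMap.congr_fun h (lp.single 1 0 1)
  rw [lpTopPairing_single, LinearMap.zero_apply, mul_one] at h0
  simp [cesaroDualEigen, (hw 0).ne'] at h0

lemma exists_norm_cesaroDualEigen_le_mul {w : ℕ → ℝ} (hw : ∀ n, 0 < w n) {s : ℝ}
    (hs : s ∈ Sset w) {a : ℂ} (ha : 0 ≤ a.re) (hsa : s ≤ a.re) :
    ∃ B, ∀ k, ‖cesaroDualEigen a k‖ ≤ B * w k := by
  obtain ⟨B, -, hB⟩ := exists_rpow_neg_le_of_mem_Sset hw hs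
  obtain ⟨C, hC⟩ := cesaroDualEigen.norm_le a ha
  have hC0 : 0 ≤ C := nonneg_of_mul_nonneg_left ((norm_nonneg _).trans (hC 0)) (by simp)
  refine ⟨C * B, fun k => (hC k).trans ?_⟩
  rw [mul_assoc]
  gcongr
  exact (Real.rpow_le_rpow_of_exponent_le (by simp) (neg_le_neg hsa)).trans (hB k)

lemma exists_norm_cesaroDualEigen_natCast_le_mul {w : ℕ → ℝ} (hw : ∀ n, 0 < w n) {m : ℕ}
    (hm : m ≠ 0) : ∃ B, ∀ k, ‖cesaroDualEigen m k‖ ≤ B * w k := by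
  have hlim : Tendsto (fun k => ‖cesaroDualEigen m k‖ / w k) atTop (𝓝 0) :=
    tendsto_const_nhds.congr' ((eventually_ge_atTop m).mono fun k hk => by
      dsimp only
      rw [cesaroDualEigen.natCast_eq_zero hm hk, norm_zero, zero_div])
  obtain ⟨B, hB⟩ := hlim.bddAbove_range
  exact ⟨B, fun k => (div_le_iff₀ (hw k)).1 (hB (Set.mem_range_self k))⟩

lemma lt_re_inv_of_mem_ball {c : ℝ} (hc : 0 < c) {μ : ℂ}
    (hμ : μ ∈ Metric.ball ((1 / (2 * c) : ℝ) : ℂ) (1 / (2 * c))) : c < μ⁻¹.re := by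
  rw [Metric.mem_ball, dist_eq_norm] at hμ
  have hsq := (sq_lt_sq₀ (norm_nonneg _) (by positivity)).2 hμ
  rw [Complex.sq_norm, Complex.normSq_apply] at hsq
  have hlt : c * Complex.normSq μ < μ.re := by
    simp only [Complex.sub_re, Complex.ofReal_re, Complex.sub_im, Complex.ofReal_im, sub_zero]
      at hsq
    rw [Complex.normSq_apply]
    field_simp at hsq
    nlinarith
  have hμ0 : μ ≠ 0 := by
    rintro rfl
    simp at hlt
  rwa [Complex.inv_re, lt_div_iff₀ (Complex.normSq_pos.2 hμ0)]

theorem disc_subset_spectrum_general (w : ℕ → ℝ)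
    (hw : ∀ n, 0 < w n)
    (hM : Mvw w w ≠ ⊤)
    (T : ellOne →L[ℂ] ellOne) (hT : IsCesaroOp w w T)
    (hS : (Sset w).Nonempty) :
    0 < sInf (Sset w) ∧
      ({lam : ℂ | ‖lam - ((1 / (2 * sInf (Sset w)) : ℝ) : ℂ)‖ ≤ 1 / (2 * sInf (Sset w))}
          ∪ {z : ℂ | ∃ m : ℕ, 1 ≤ m ∧ z = ((m : ℂ))⁻¹}) ⊆ spectrum ℂ T := by
  obtain ⟨hsum, M, htail⟩ :=
    summable_and_exists_weightTail_le_of_Mvw_ne_top hw (fun n => (hw n).le) hM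
  have hM0 := pos_of_weightTail_le_mul hw hsum htail
  have hs₁ : 0 < sInf (Sset w) :=
    (inv_pos.2 hM0).trans_le (le_csInf hS fun s hs => inv_le_of_mem_Sset hw hsum hM0 htail hs)
  have hspec : ∀ a : ℂ, 0 < a.re → (∃ B, ∀ k, ‖cesaroDualEigen a k‖ ≤ B * w k) →
      a⁻¹ ∈ spectrum ℂ T := fun a ha ⟨B, hB⟩ =>
    inv_mem_spectrum_of_norm_cesaroDualEigen_le hw hsum htail hT ha hB
  refine ⟨hs₁, Set.union_subset ?_ ?_⟩
  · have hball : Metric.ball ((1 / (2 * sInf (Sset w)) : ℝ) : ℂ) (1 / (2 * sInf (Sset w)))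
        ⊆ spectrum ℂ T := fun μ hμ => by
      have hre := lt_re_inv_of_mem_ball hs₁ hμ
      obtain ⟨s, hs, hsμ⟩ := exists_lt_of_csInf_lt hS hre
      simpa using hspec μ⁻¹ (hs₁.trans hre)
        (exists_norm_cesaroDualEigen_le_mul hw hs (hs₁.trans hre).le hsμ.le)
    intro lam hlam
    refine closure_minimal hball (spectrum.isClosed T) ?_
    rwa [closure_ball _ (by positivity), Metric.mem_closedBall, dist_eq_norm]
  · rintro _ ⟨m, hm, rfl⟩
    exact hspec m (by simp only [Complex.natCast_re, Nat.cast_pos]; omega)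
      (exists_norm_cesaroDualEigen_natCast_le_mul hw (by omega))

theorem disc_subset_spectrum (w : ℕ → ℝ)
    (hw : ∀ n, 0 < w n) (hwb : ∃ C, ∀ n, w n ≤ C)
    (hM : Mvw w w ≠ ⊤)
    (T : ellOne →L[ℂ] ellOne) (hT : IsCesaroOp w w T)
    (hS : (Sset w).Nonempty) :
    0 < sInf (Sset w) ∧
      ({lam : ℂ | ‖lam - ((1 / (2 * sInf (Sset w)) : ℝ) : ℂ)‖ ≤ 1 / (2 * sInf (Sset w))}
          ∪ {z : ℂ | ∃ m : ℕ, 1 ≤ m ∧ z = ((m : ℂ))⁻¹}) ⊆ spectrum ℂ T :=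
  disc_subset_spectrum_general w hw hM T hT hS
end
end

section
/- Let w be a weight with M_w < ∞ and let T : ℓ¹ → ℓ¹ be the continuous linear operator satisfying (T x)(n) = (w(n)/n) ∑_{k=1}^n x(k)/w(k) for all x ∈ ℓ¹ and n ≥ 1; let e_r denote the r-th canonical unit vector of ℓ¹. Then: (i) for every r ≥ 2, e_r lies in the range of I − T; (ii) the closure of the range of I − T equals {x ∈ ℓ¹ : x(1) = 0}; (iii) ker(I − T) ≠ {0} if and only if ∑_{n≥1} w(n) < ∞, and in that case ker(I − T) is the one-dimensional span of the vector (w(n))_{n≥1} ∈ ℓ¹ (the image under Φ_w of the constant sequence 𝟏). -/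
/-!
Dividing coordinatewise by `w` turns `T` into the Cesàro mean of scalar sequences:
`(T x) n = w n * cesaroMean (x / w) n`. A sequence equals its own Cesàro means iff it is
constant, so the fixed points of `T` are the multiples of `w`, and these lie in `ℓ¹` exactly when
`w` is summable. For `r ≥ 1` the finitely supported sequence `δ_r - r⁻¹ 𝟙_{[0, r)}` has
Cesàro defect `δ_r`; multiplied by `w / w r` it is a preimage of `e_r` under `I - T`. Every
`x - T x` vanishes at `0`, and the `e_r` with `r ≥ 1` span a dense subspace of `{x | x 0 = 0}`.
-/

-- Index `n : ℕ` corresponds to the paper's `n + 1`.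

open Filter Topology

noncomputable section

open Finset

section CesaroMean

variable {K : Type*} [Field K]

def cesaroMean (y : ℕ → K) (n : ℕ) : K :=
  (∑ k ∈ range (n + 1), y k) / (n + 1)

theorem cesaroMean_const [CharZero K] (c : K) (n : ℕ) : cesaroMean (fun _ => c) n = c := by
  have : (n : K) + 1 ≠ 0 := Nat.cast_add_one_ne_zero n
  simp only [cesaroMean, sum_const, card_range, nsmul_eq_mul]
  push_cast
  field_simp

theorem cesaroMean_const_mul (c : K) (y : ℕ → K) (n : ℕ) :
    cesaroMean (fun k => c * y k) n = c * cesaroMean y n := by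
  simp only [cesaroMean, ← mul_sum, mul_div_assoc]

theorem cesaroMean_eq_self_iff [CharZero K] {y : ℕ → K} :
    (∀ n, cesaroMean y n = y n) ↔ ∀ n, y n = y 0 := by
  refine ⟨fun h => ?_, fun h n => by rw [funext h, cesaroMean_const]⟩
  have hsum : ∀ n, ∑ k ∈ range (n + 1), y k = (n + 1) * y n := fun n => by
    have := h n
    rw [cesaroMean, div_eq_iff (Nat.cast_add_one_ne_zero n)] at this
    rw [this, mul_comm]
  intro n
  induction n with
  | zero => rfl
  | succ n ih =>
    have step := hsum (n + 1)
    rw [sum_range_succ, hsum n, ih] at step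
    push_cast at step
    have hn : (n : K) + 1 ≠ 0 := Nat.cast_add_one_ne_zero n
    apply mul_left_cancel₀ hn
    linear_combination -step

def cesaroPreimage (r : ℕ) (k : ℕ) : K :=
  (Pi.single r 1 : ℕ → K) k - if k < r then (r : K)⁻¹ else 0

theorem cesaroPreimage_of_lt {r k : ℕ} (h : k < r) :
    cesaroPreimage (K := K) r k = -(r : K)⁻¹ := by
  rw [cesaroPreimage, Pi.single_eq_of_ne h.ne, if_pos h, zero_sub]

theorem cesaroPreimage_self (r : ℕ) : cesaroPreimage (K := K) r r = 1 := by
  rw [cesaroPreimage, Pi.single_eq_same, if_neg (lt_irrefl r), sub_zero]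

theorem cesaroPreimage_of_gt {r k : ℕ} (h : r < k) : cesaroPreimage (K := K) r k = 0 := by
  rw [cesaroPreimage, Pi.single_eq_of_ne h.ne', if_neg h.not_gt, sub_zero]

theorem sum_range_cesaroPreimage [CharZero K] {r : ℕ} (hr : 1 ≤ r) (n : ℕ) :
    ∑ k ∈ range (n + 1), cesaroPreimage (K := K) r k =
      if n < r then -(((n : K) + 1) / r) else 0 := by
  have hr0 : (r : K) ≠ 0 := Nat.cast_ne_zero.2 (by omega)
  induction n with
  | zero =>
    rw [sum_range_one, cesaroPreimage_of_lt hr, if_pos (show 0 < r from hr)]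
    simp
  | succ n ih =>
    rw [sum_range_succ, ih]
    rcases lt_trichotomy (n + 1) r with h | rfl | h
    · rw [if_pos (by omega), if_pos h, cesaroPreimage_of_lt h]
      field_simp
      push_cast
      ring
    · rw [if_pos (lt_add_one n), if_neg (lt_irrefl _), cesaroPreimage_self]
      push_cast
      field_simp
      ring
    · rw [if_neg (by omega), if_neg (by omega), cesaroPreimage_of_gt h, add_zero]

theorem cesaroPreimage_sub_cesaroMean [CharZero K] {r : ℕ} (hr : 1 ≤ r) (n : ℕ) :
    cesaroPreimage r n - cesaroMean (cesaroPreimage r) n = (Pi.single r 1 : ℕ → K) n := by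
  have hn : (n : K) + 1 ≠ 0 := Nat.cast_add_one_ne_zero n
  rw [cesaroMean, sum_range_cesaroPreimage hr]
  rcases lt_trichotomy n r with h | rfl | h
  · rw [cesaroPreimage_of_lt h, if_pos h, Pi.single_eq_of_ne h.ne]
    field_simp
    ring
  · rw [cesaroPreimage_self, if_neg (lt_irrefl n), Pi.single_eq_same, zero_div, sub_zero]
  · rw [cesaroPreimage_of_gt h, if_neg h.not_gt, Pi.single_eq_of_ne h.ne', zero_div, sub_zero]

end CesaroMean

theorem lp.mem_closure_of_forall_single_mem {α : Type*} [DecidableEq α] {E : α → Type*}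
    [∀ i, NormedAddCommGroup (E i)] {p : ENNReal} [Fact (1 ≤ p)] (hp : p ≠ ⊤)
    {S : AddSubmonoid (lp E p)} {f : lp E p} (h : ∀ i, lp.single p i (f i) ∈ S) :
    f ∈ closure (S : Set (lp E p)) :=
  mem_closure_of_tendsto (lp.hasSum_single hp f) <|
    Eventually.of_forall fun _ => sum_mem fun i _ => h i

namespace IsCesaroOp

variable {v w : ℕ → ℝ} {T : ellOne →L[ℂ] ellOne}

theorem apply_eq_mul_cesaroMean (hT : IsCesaroOp v w T) (x : ellOne) (n : ℕ) :
    T x n = w n * cesaroMean (fun k => x k / v k) n := by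
  rw [hT, cesaroMean]
  push_cast
  ring

theorem map_eq_self_iff (hT : IsCesaroOp w w T) (hw : ∀ n, w n ≠ 0) (x : ellOne) :
    T x = x ↔ ∃ c : ℂ, ∀ n, x n = c * w n := by
  have hw' : ∀ n, (w n : ℂ) ≠ 0 := fun n => Complex.ofReal_ne_zero.2 (hw n)
  calc T x = x ↔ ∀ n, cesaroMean (fun k => x k / w k) n = x n / w n := by
        simp only [lp.ext_iff, funext_iff]
        refine forall_congr' fun n => ?_
        rw [hT.apply_eq_mul_cesaroMean, eq_div_iff (hw' n), mul_comm]
    _ ↔ ∀ n, x n / w n = x 0 / w 0 := cesaroMean_eq_self_iff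
    _ ↔ ∃ c : ℂ, ∀ n, x n = c * w n := by
        refine ⟨fun h => ⟨x 0 / w 0, fun n => ?_⟩, fun ⟨c, hc⟩ n => ?_⟩
        · rw [← h n, div_mul_cancel₀ _ (hw' n)]
        · rw [hc, hc, mul_div_cancel_right₀ _ (hw' n), mul_div_cancel_right₀ _ (hw' 0)]

theorem single_mem_range_sub (hT : IsCesaroOp w w T) (hw : ∀ n, w n ≠ 0) {r : ℕ}
    (hr : 1 ≤ r) :
    lp.single 1 r (1 : ℂ) ∈ Set.range fun x : ellOne => x - T x := by
  have hw' : ∀ n, (w n : ℂ) ≠ 0 := fun n => Complex.ofReal_ne_zero.2 (hw n)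
  set f : ℕ → ℂ := fun k => w k * ((w r : ℂ)⁻¹ * cesaroPreimage r k)
  have hf : Memℓp f 1 := by
    refine (memℓp_zero ((Set.finite_Iic r).subset fun k hk => ?_)).of_exponent_ge zero_le
    contrapose! hk
    simp [f, cesaroPreimage_of_gt (not_le.1 hk)]
  refine ⟨⟨f, hf⟩, lp.ext (funext fun n => ?_)⟩
  have hquot : (fun k => f k / w k) = fun k => (w r : ℂ)⁻¹ * cesaroPreimage r k :=
    funext fun k => mul_div_cancel_left₀ _ (hw' k)
  rw [lp.coeFn_sub, Pi.sub_apply, hT.apply_eq_mul_cesaroMean, hquot, cesaroMean_const_mul]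
  calc f n - w n * ((w r : ℂ)⁻¹ * cesaroMean (cesaroPreimage r) n)
      = w n * (w r : ℂ)⁻¹ * (cesaroPreimage r n - cesaroMean (cesaroPreimage r) n) := by ring
    _ = (lp.single 1 r (1 : ℂ) : ellOne) n := by
        rw [cesaroPreimage_sub_cesaroMean hr, lp.single_apply]
        by_cases h : n = r
        · subst h
          simp [hw' n]
        · simp [h]

theorem closure_range_sub (hT : IsCesaroOp w w T) (hw : ∀ n, w n ≠ 0) :
    closure (Set.range fun x : ellOne => x - T x) = {x : ellOne | x 0 = 0} := by
  set R := LinearMap.range (LinearMap.id - (T : ellOne →ₗ[ℂ] ellOne))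
  have hR : (Set.range fun x : ellOne => x - T x) = R :=
    (LinearMap.coe_range (LinearMap.id - (T : ellOne →ₗ[ℂ] ellOne))).symm
  apply subset_antisymm
  · refine closure_minimal ?_ <|
      isClosed_eq (lp.lipschitzWith_one_eval 1 0).continuous continuous_const
    rintro _ ⟨x, rfl⟩
    have hw0 : (w 0 : ℂ) ≠ 0 := Complex.ofReal_ne_zero.2 (hw 0)
    simp [hT.apply_eq_mul_cesaroMean, cesaroMean, mul_div_cancel₀ _ hw0]
  · intro x (hx : x 0 = 0)
    rw [hR]
    refine lp.mem_closure_of_forall_single_mem ENNReal.one_ne_top (S := R.toAddSubmonoid)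
      fun i => ?_
    rcases Nat.eq_zero_or_pos i with rfl | hi
    · rw [hx, lp.single_zero]
      exact zero_mem R
    · rw [← mul_one (x i), ← smul_eq_mul, lp.single_smul]
      exact R.smul_mem _ (SetLike.mem_coe.1 (hR ▸ hT.single_mem_range_sub hw hi))

theorem exists_ne_zero_map_eq_self_iff (hT : IsCesaroOp w w T) (hw : ∀ n, 0 < w n) :
    (∃ x : ellOne, x ≠ 0 ∧ T x = x) ↔ Summable w := by
  have hw0 : ∀ n, w n ≠ 0 := fun n => (hw n).ne'
  constructor
  · rintro ⟨x, hx0, hTx⟩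
    obtain ⟨c, hc⟩ := (hT.map_eq_self_iff hw0 x).1 hTx
    have hc0 : c ≠ 0 := by
      rintro rfl
      exact hx0 (lp.ext (funext fun n => by simp [hc n]))
    have hnorm : (fun n => ‖x n‖) = fun n => ‖c‖ * w n := by
      ext n
      rw [hc n, norm_mul, Complex.norm_real, Real.norm_of_nonneg (hw n).le]
    refine (summable_mul_left_iff (norm_ne_zero_iff.2 hc0)).1 ?_
    rw [← hnorm]
    simpa using (lp.memℓp x).summable (by norm_num)
  · intro hs
    have hmem : Memℓp (fun n => (w n : ℂ)) 1 := by
      refine memℓp_gen ?_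
      simpa [Real.norm_of_nonneg (hw _).le] using hs
    refine ⟨⟨_, hmem⟩, fun h => hw0 0 (by simpa using congrArg (· 0) h), ?_⟩
    exact (hT.map_eq_self_iff hw0 _).2 ⟨1, fun n => (one_mul _).symm⟩

end IsCesaroOp

theorem range_and_kernel_of_id_sub_cesaro_general (w : ℕ → ℝ)
    (hw : ∀ n, 0 < w n)
    (T : ellOne →L[ℂ] ellOne) (hT : IsCesaroOp w w T) :
    (∀ r : ℕ, 1 ≤ r → lp.single 1 r (1 : ℂ) ∈ Set.range (fun x : ellOne => x - T x)) ∧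
      (closure (Set.range (fun x : ellOne => x - T x))
        = {x : ellOne | (x : ∀ _ : ℕ, ℂ) 0 = 0}) ∧
      ((∃ x : ellOne, x ≠ 0 ∧ T x = x) ↔ Summable w) ∧
      (Summable w → ∀ x : ellOne,
        (T x = x ↔ ∃ c : ℂ, ∀ n : ℕ, (x : ∀ _ : ℕ, ℂ) n = c * (w n : ℂ))) := by
  have hw0 : ∀ n, w n ≠ 0 := fun n => (hw n).ne'
  exact ⟨fun _ hr => hT.single_mem_range_sub hw0 hr, hT.closure_range_sub hw0,
    hT.exists_ne_zero_map_eq_self_iff hw, fun _ => hT.map_eq_self_iff hw0⟩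

theorem range_and_kernel_of_id_sub_cesaro (w : ℕ → ℝ)
    (hw : ∀ n, 0 < w n) (hwb : ∃ C, ∀ n, w n ≤ C)
    (hM : Mvw w w ≠ ⊤)
    (T : ellOne →L[ℂ] ellOne) (hT : IsCesaroOp w w T) :
    (∀ r : ℕ, 1 ≤ r → lp.single 1 r (1 : ℂ) ∈ Set.range (fun x : ellOne => x - T x)) ∧
      (closure (Set.range (fun x : ellOne => x - T x))
        = {x : ellOne | (x : ∀ _ : ℕ, ℂ) 0 = 0}) ∧
      ((∃ x : ellOne, x ≠ 0 ∧ T x = x) ↔ Summable w) ∧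
      (Summable w → ∀ x : ellOne,
        (T x = x ↔ ∃ c : ℂ, ∀ n : ℕ, (x : ∀ _ : ℕ, ℂ) n = c * (w n : ℂ))) :=
  range_and_kernel_of_id_sub_cesaro_general w hw T hT
end
end

section
/- Let w be a weight with M_w < ∞ and let T : ℓ¹ → ℓ¹ be the continuous linear operator satisfying (T x)(n) = (w(n)/n) ∑_{k=1}^n x(k)/w(k) for all x ∈ ℓ¹ and n ≥ 1. Then: (i) T is power bounded (sup_{m≥1} ‖T^m‖ < ∞) if and only if for every x ∈ ℓ¹ the sequence (T^m x)_{m≥1} converges in ℓ¹; in that case the limit P x satisfies T(P x) = P x and x − P x lies in the closure of the range of I − T (so the iterates converge in the strong operator topology to the projection onto ker(I − T) along the closure of (I − T)(ℓ¹)), and in particular T is mean ergodic. (ii) T is mean ergodic (for every x ∈ ℓ¹ the Cesàro averages (1/n) ∑_{m=1}^n T^m x converge in ℓ¹ as n → ∞) if and only if T is Cesàro bounded (sup_{n≥1} ‖(1/n) ∑_{m=1}^n T^m‖ < ∞). -/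
/-!
Conjugating by `x ↦ (x n / w n)` turns `T` into the Cesàro matrix `C`, so
`(T ^ m) eⱼ = (w n / w j · (C ^ m) n j)ₙ`. The entries of each column of `C ^ m` lie in `[0, 1]`
and converge as `m → ∞`: column `0` to `1` and the other columns to `0`, both at the rate
`(n / (n + 1)) ^ m`. Hence a power bound, or a Cesàro bound, tested on `e₀` forces
`‖w / w 0‖₁ < ∞` by Fatou's lemma. Conversely, once `w` is summable, dominated convergence gives
convergence of `(T ^ m) eⱼ` for each `j`, and a uniformly bounded sequence of operators converging
on the unit vectors converges at every point of `ℓ¹`. The reverse implications are the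
Banach–Steinhaus theorem.
-/

open Filter Topology

noncomputable section

def CesaroBounded (T : ellOne →L[ℂ] ellOne) : Prop :=
  ∃ C : ℝ, ∀ n : ℕ, 1 ≤ n → ‖((n : ℂ))⁻¹ • ∑ m ∈ Finset.Icc 1 n, T ^ m‖ ≤ C

def PowerBounded (T : ellOne →L[ℂ] ellOne) : Prop :=
  ∃ C : ℝ, ∀ m : ℕ, 1 ≤ m → ‖T ^ m‖ ≤ C

def MeanErgodic (T : ellOne →L[ℂ] ellOne) : Prop :=
  ∀ x : ellOne, ∃ y : ellOne,
    Tendsto (fun n : ℕ => ((n : ℂ))⁻¹ • ∑ m ∈ Finset.Icc 1 n, (T ^ m) x) atTop (nhds y)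

open Finset

def cesaroAvg : (ℕ → ℝ) →ₗ[ℝ] ℕ → ℝ where
  toFun f n := ((n : ℝ) + 1)⁻¹ * ∑ k ∈ range (n + 1), f k
  map_add' f g := by ext n; simp [sum_add_distrib, mul_add]
  map_smul' c f := by ext n; simp [mul_sum, mul_left_comm]

lemma cesaroAvg_apply (f : ℕ → ℝ) (n : ℕ) :
    cesaroAvg f n = ((n : ℝ) + 1)⁻¹ * ∑ k ∈ range (n + 1), f k := rfl

lemma cesaroAvg_apply_zero (f : ℕ → ℝ) : cesaroAvg f 0 = f 0 := by
  simp [cesaroAvg_apply]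

lemma cesaroAvg_one : cesaroAvg 1 = 1 := by
  ext n
  simp [cesaroAvg_apply]
  field_simp

lemma cesaroAvg_mono : Monotone cesaroAvg := fun _ _ h n =>
  mul_le_mul_of_nonneg_left (sum_le_sum fun k _ => h k) (by positivity)

lemma mapsTo_cesaroAvg_Icc : Set.MapsTo cesaroAvg (Set.Icc 0 1) (Set.Icc 0 1) :=
  fun _ ⟨h0, h1⟩ => ⟨map_zero cesaroAvg ▸ cesaroAvg_mono h0, cesaroAvg_one ▸ cesaroAvg_mono h1⟩

lemma pow_cesaroAvg_apply_zero (m : ℕ) (f : ℕ → ℝ) : (cesaroAvg ^ m) f 0 = f 0 := by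
  rw [Module.End.coe_pow]
  induction m with
  | zero => rfl
  | succ m ih => rw [Function.iterate_succ_apply', cesaroAvg_apply_zero, ih]

lemma cesaroAvg_le_pow_succ {f : ℕ → ℝ} {m : ℕ} (h0 : f 0 ≤ 0)
    (hf : ∀ n, f n ≤ ((n : ℝ) / (n + 1)) ^ m) (n : ℕ) :
    cesaroAvg f n ≤ ((n : ℝ) / (n + 1)) ^ (m + 1) := by
  have hsum : ∑ k ∈ range (n + 1), f k ≤ n * ((n : ℝ) / (n + 1)) ^ m := by
    rw [sum_range_succ']
    calc ∑ k ∈ range n, f (k + 1) + f 0 ≤ ∑ _k ∈ range n, ((n : ℝ) / (n + 1)) ^ m + 0 := by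
          gcongr with k hk
          refine (hf (k + 1)).trans (pow_le_pow_left₀ (by positivity) ?_ m)
          have : (k : ℝ) + 1 ≤ n := by exact_mod_cast mem_range.1 hk
          rw [div_le_div_iff₀ (by positivity) (by positivity)]
          push_cast
          nlinarith
      _ = n * ((n : ℝ) / (n + 1)) ^ m := by simp
  calc cesaroAvg f n ≤ ((n : ℝ) + 1)⁻¹ * (n * ((n : ℝ) / (n + 1)) ^ m) :=
        mul_le_mul_of_nonneg_left hsum (by positivity)
    _ = ((n : ℝ) / (n + 1)) ^ (m + 1) := by rw [pow_succ]; ring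

lemma pow_cesaroAvg_le {f : ℕ → ℝ} (h0 : f 0 ≤ 0) (h1 : f ≤ 1) (m n : ℕ) :
    (cesaroAvg ^ m) f n ≤ ((n : ℝ) / (n + 1)) ^ m := by
  induction m generalizing n with
  | zero => simpa using h1 n
  | succ m ih =>
    rw [pow_succ', Module.End.mul_apply]
    exact cesaroAvg_le_pow_succ (by rwa [pow_cesaroAvg_apply_zero]) ih n

lemma tendsto_div_add_one_pow (n : ℕ) :
    Tendsto (fun m => ((n : ℝ) / (n + 1)) ^ m) atTop (𝓝 0) :=
  tendsto_pow_atTop_nhds_zero_of_lt_one (by positivity)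
    ((div_lt_one (by positivity)).2 (by linarith))

def cesaroPow (m j : ℕ) : ℕ → ℝ := (cesaroAvg ^ m) (Pi.single j 1)

lemma cesaroPow_zero (j : ℕ) : cesaroPow 0 j = Pi.single j 1 := rfl

lemma cesaroPow_succ (m j : ℕ) : cesaroPow (m + 1) j = cesaroAvg (cesaroPow m j) := by
  rw [cesaroPow, pow_succ', Module.End.mul_apply, cesaroPow]

lemma cesaroPow_mem_Icc (m j : ℕ) : cesaroPow m j ∈ Set.Icc 0 1 := by
  rw [cesaroPow, Module.End.coe_pow]
  refine mapsTo_cesaroAvg_Icc.iterate m ⟨fun n => ?_, fun n => ?_⟩ <;>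
    by_cases h : n = j <;> simp [h]

lemma tendsto_cesaroPow_of_ne_zero {j : ℕ} (hj : j ≠ 0) (n : ℕ) :
    Tendsto (fun m => cesaroPow m j n) atTop (𝓝 0) :=
  squeeze_zero (fun m => (cesaroPow_mem_Icc m j).1 n)
    (fun m => pow_cesaroAvg_le (Pi.single_eq_of_ne hj.symm _).le (cesaroPow_mem_Icc 0 j).2 m n)
    (tendsto_div_add_one_pow n)

lemma tendsto_cesaroPow_zero_right (n : ℕ) : Tendsto (fun m => cesaroPow m 0 n) atTop (𝓝 1) := by
  set defect : ℕ → ℝ := 1 - Pi.single 0 1 with hdefect_def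
  have hcesaroPow : ∀ m, cesaroPow m 0 n = 1 - (cesaroAvg ^ m) defect n := by
    intro m
    simp only [hdefect_def, map_sub, Module.End.pow_apply cesaroAvg m 1,
      Function.iterate_fixed cesaroAvg_one, Pi.sub_apply, Pi.one_apply, cesaroPow, sub_sub_cancel]
  have hdefect : Tendsto (fun m => (cesaroAvg ^ m) defect n) atTop (𝓝 0) := by
    refine squeeze_zero (fun m => ?_)
      (fun m => pow_cesaroAvg_le (f := defect) (by simp [hdefect_def])
        (sub_le_self 1 (cesaroPow_mem_Icc 0 0).1) m n) (tendsto_div_add_one_pow n)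
    simpa [hcesaroPow] using (cesaroPow_mem_Icc m 0).2 n
  simpa [hcesaroPow] using
    (tendsto_const_nhds : Tendsto (fun _ : ℕ => (1 : ℝ)) atTop (𝓝 1)).sub hdefect

lemma exists_tendsto_cesaroPow (j n : ℕ) :
    ∃ L, Tendsto (fun m => cesaroPow m j n) atTop (𝓝 L) := by
  rcases eq_or_ne j 0 with rfl | hj
  · exact ⟨1, tendsto_cesaroPow_zero_right n⟩
  · exact ⟨0, tendsto_cesaroPow_of_ne_zero hj n⟩

lemma Filter.Tendsto.cesaro_smul_Icc {E : Type*} [NormedAddCommGroup E] [NormedSpace ℂ E]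
    {u : ℕ → E} {l : E} (h : Tendsto u atTop (𝓝 l)) :
    Tendsto (fun n : ℕ => (n : ℂ)⁻¹ • ∑ m ∈ Icc 1 n, u m) atTop (𝓝 l) := by
  refine ((tendsto_add_atTop_iff_nat 1).2 h).cesaro_smul.congr fun n => ?_
  rw [← Ico_add_one_right_eq_Icc, sum_Ico_eq_sum_range, ← Complex.coe_smul]
  simp [add_comm]

section StrongConvergence

variable {𝕜 E F : Type*} [NontriviallyNormedField 𝕜] [NormedAddCommGroup E] [NormedSpace 𝕜 E]
  [NormedAddCommGroup F] [NormedSpace 𝕜 F]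

def convergentSubmodule (S : ℕ → E →L[𝕜] F) : Submodule 𝕜 E where
  carrier := {x | ∃ y, Tendsto (fun m => S m x) atTop (𝓝 y)}
  zero_mem' := ⟨0, by simp⟩
  add_mem' := fun ⟨y, hy⟩ ⟨y', hy'⟩ => ⟨y + y', by simpa using hy.add hy'⟩
  smul_mem' c _ := fun ⟨y, hy⟩ => ⟨c • y, by simpa using hy.const_smul c⟩

lemma cauchySeq_apply_of_mem_closure {S : ℕ → E →L[𝕜] F} {C : ℝ}
    (hC : ∀ᶠ m in atTop, ‖S m‖ ≤ C) {x : E} (hx : x ∈ closure (convergentSubmodule S : Set E)) :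
    CauchySeq fun m => S m x := by
  obtain ⟨N₀, hN₀⟩ := eventually_atTop.1 hC
  have hC0 : 0 ≤ C := (norm_nonneg _).trans (hN₀ N₀ le_rfl)
  rw [Metric.cauchySeq_iff]
  intro ε hε
  obtain ⟨x', ⟨y, hy⟩, hxx'⟩ := Metric.mem_closure_iff.1 hx (ε / (3 * (C + 1))) (by positivity)
  obtain ⟨N, hN⟩ := Metric.cauchySeq_iff.1 hy.cauchySeq (ε / 3) (by positivity)
  have hclose : ∀ m ≥ N₀, dist (S m x) (S m x') ≤ ε / 3 := fun m hm => calc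
    dist (S m x) (S m x') ≤ ‖S m‖ * dist x x' := by
        rw [dist_eq_norm, dist_eq_norm, ← map_sub]; exact (S m).le_opNorm _
    _ ≤ C * (ε / (3 * (C + 1))) := by gcongr; exact hN₀ m hm
    _ ≤ ε / 3 := by
        rw [mul_div_assoc', div_le_div_iff₀ (by positivity) (by positivity)]; nlinarith
  refine ⟨max N N₀, fun m hm n hn => ?_⟩
  calc dist (S m x) (S n x)
      ≤ dist (S m x) (S m x') + dist (S m x') (S n x') + dist (S n x') (S n x) :=
        dist_triangle4 _ _ _ _
    _ < ε := by
        have := hN m (le_of_max_le_left hm) n (le_of_max_le_left hn)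
        linarith [hclose m (le_of_max_le_right hm), dist_comm (S n x') (S n x) ▸
          hclose n (le_of_max_le_right hn)]

lemma isClosed_convergentSubmodule [CompleteSpace F] {S : ℕ → E →L[𝕜] F} {C : ℝ}
    (hC : ∀ᶠ m in atTop, ‖S m‖ ≤ C) : IsClosed (convergentSubmodule S : Set E) :=
  isClosed_of_closure_subset fun _ hx =>
    cauchySeq_tendsto_of_complete (cauchySeq_apply_of_mem_closure hC hx)

lemma exists_norm_le_of_forall_exists_tendsto [CompleteSpace E] {S : ℕ → E →L[𝕜] F}
    (h : ∀ x, ∃ y, Tendsto (fun m => S m x) atTop (𝓝 y)) : ∃ C, ∀ m, ‖S m‖ ≤ C :=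
  banach_steinhaus fun x =>
    let ⟨_, hy⟩ := h x
    let ⟨C, hC⟩ := hy.norm.bddAbove_range
    ⟨C, fun m => hC ⟨m, rfl⟩⟩

end StrongConvergence

lemma lp.exists_tendsto_of_forall_single {𝕜 ι F : Type*} {E : ι → Type*} [DecidableEq ι]
    [NontriviallyNormedField 𝕜] [∀ i, NormedAddCommGroup (E i)] [∀ i, NormedSpace 𝕜 (E i)]
    [NormedAddCommGroup F] [NormedSpace 𝕜 F] [CompleteSpace F]
    {p : ENNReal} [Fact (1 ≤ p)] (hp : p ≠ ⊤) {S : ℕ → lp E p →L[𝕜] F} {C : ℝ}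
    (hC : ∀ᶠ m in atTop, ‖S m‖ ≤ C)
    (hsingle : ∀ i a, ∃ y, Tendsto (fun m => S m (lp.single p i a)) atTop (𝓝 y)) (x : lp E p) :
    ∃ y, Tendsto (fun m => S m x) atTop (𝓝 y) :=
  (isClosed_convergentSubmodule hC).mem_of_tendsto (lp.hasSum_single hp x)
    (Eventually.of_forall fun _ => Submodule.sum_mem _ fun i _ => hsingle i (x i))

lemma lp.memℓp_of_tendsto_of_eventually_norm_le {ι : Type*} {E : ι → Type*}
    [∀ i, NormedAddCommGroup (E i)] {p : ENNReal} [Fact (1 ≤ p)] {F : ℕ → lp E p} {C : ℝ}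
    (hC : ∀ᶠ k in atTop, ‖F k‖ ≤ C) {f : ∀ i, E i}
    (hf : ∀ i, Tendsto (fun k => F k i) atTop (𝓝 (f i))) : Memℓp f p := by
  obtain ⟨N, hN⟩ := eventually_atTop.1 hC
  refine lp.memℓp_of_tendsto (F := fun k => F (k + N)) ?_
    (tendsto_pi_nhds.2 fun i => (hf i).comp (tendsto_add_atTop_nat N))
  exact isBounded_iff_forall_norm_le.2 ⟨C, Set.forall_mem_range.2 fun k => hN _ (by omega)⟩

lemma lp.exists_tendsto_of_tendsto_apply_of_norm_le {ι E : Type*} [NormedAddCommGroup E]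
    {F : ℕ → lp (fun _ : ι => E) 1} {f : ι → E} {b : ι → ℝ} (hb : Summable b)
    (hFb : ∀ k i, ‖F k i‖ ≤ b i) (hf : ∀ i, Tendsto (fun k => F k i) atTop (𝓝 (f i))) :
    ∃ y, Tendsto F atTop (𝓝 y) := by
  have hfb : ∀ i, ‖f i‖ ≤ b i := fun i => le_of_tendsto' (hf i).norm fun k => hFb k i
  have hf1 : Memℓp f 1 :=
    memℓp_gen (by simpa using hb.of_nonneg_of_le (fun i => norm_nonneg _) hfb)
  refine ⟨⟨f, hf1⟩, tendsto_iff_norm_sub_tendsto_zero.2 ?_⟩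
  have hnorm : ∀ k, ‖F k - ⟨f, hf1⟩‖ = ∑' i, ‖F k i - f i‖ := fun k => by
    have := lp.norm_eq_tsum_rpow (by simp) (F k - ⟨f, hf1⟩)
    simp only [ENNReal.toReal_one, Real.rpow_one, div_one] at this
    exact this
  simp only [hnorm]
  simpa using tendsto_tsum_of_dominated_convergence (hb.mul_left 2)
    (fun i => ((hf i).sub_const (f i)).norm)
    (Eventually.of_forall fun k i => by
      rw [norm_norm, two_mul]; exact (norm_sub_le _ _).trans (add_le_add (hFb k i) (hfb i)))

lemma inv_smul_sum_pow_apply {𝕜 E : Type*} [NormedField 𝕜] [NormedAddCommGroup E]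
    [NormedSpace 𝕜 E] (T : E →L[𝕜] E) (n : ℕ) (x : E) :
    ((n : 𝕜)⁻¹ • ∑ m ∈ Icc 1 n, T ^ m) x = (n : 𝕜)⁻¹ • ∑ m ∈ Icc 1 n, (T ^ m) x := by
  simp only [smul_apply, _root_.sum_apply]

section Iterates

variable {R M : Type*} [Ring R] [TopologicalSpace M] [AddCommGroup M] [Module R M]

lemma ContinuousLinearMap.apply_eq_self_of_tendsto_pow [T2Space M] (T : M →L[R] M) {x y : M}
    (h : Tendsto (fun m => (T ^ m) x) atTop (𝓝 y)) : T y = y :=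
  isFixedPt_of_tendsto_iterate (by simpa using h) T.continuous.continuousAt

lemma ContinuousLinearMap.sub_mem_closure_range_of_tendsto_pow [IsTopologicalAddGroup M]
    (T : M →L[R] M) {x y : M} (h : Tendsto (fun m => (T ^ m) x) atTop (𝓝 y)) :
    x - y ∈ closure (Set.range fun z => z - T z) :=
  mem_closure_of_tendsto (tendsto_const_nhds.sub h) <| Eventually.of_forall fun m =>
    ⟨(∑ k ∈ range m, T ^ k) x, by simpa using congr($(mul_neg_geom_sum T m) x)⟩

end Iterates

lemma PowerBounded.of_tendsto_pow {T : ellOne →L[ℂ] ellOne}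
    (h : ∀ x, ∃ y, Tendsto (fun m => (T ^ m) x) atTop (𝓝 y)) : PowerBounded T :=
  let ⟨C, hC⟩ := exists_norm_le_of_forall_exists_tendsto h
  ⟨C, fun m _ => hC m⟩

lemma MeanErgodic.cesaroBounded {T : ellOne →L[ℂ] ellOne} (h : MeanErgodic T) :
    CesaroBounded T :=
  let ⟨C, hC⟩ := exists_norm_le_of_forall_exists_tendsto
    (S := fun n : ℕ => (n : ℂ)⁻¹ • ∑ m ∈ Icc 1 n, T ^ m)
    fun x => by simpa only [inv_smul_sum_pow_apply] using h x
  ⟨C, fun n _ => hC n⟩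

section CesaroOperator

variable {w : ℕ → ℝ} {T : ellOne →L[ℂ] ellOne}

lemma IsCesaroOp.pow_single_apply (hw : ∀ n, w n ≠ 0) (hT : IsCesaroOp w w T)
    (m j : ℕ) (a : ℂ) (n : ℕ) :
    (T ^ m) (lp.single 1 j a) n = a * ((w n / w j * cesaroPow m j n : ℝ) : ℂ) := by
  induction m generalizing n with
  | zero =>
    rcases eq_or_ne n j with rfl | hn
    · simp [cesaroPow_zero, div_self (hw n)]
    · simp [cesaroPow_zero, hn]
  | succ m ih =>
    rw [pow_succ', mul_apply_eq_comp, hT, cesaroPow_succ, cesaroAvg_apply]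
    simp_rw [ih]
    have hterm : ∀ k, a * ((w k / w j * cesaroPow m j k : ℝ) : ℂ) / (w k : ℂ)
        = a / w j * cesaroPow m j k := fun k => by
      have := Complex.ofReal_ne_zero.2 (hw k)
      push_cast
      field_simp
    rw [sum_congr rfl fun k _ => hterm k, ← mul_sum]
    push_cast
    ring

lemma IsCesaroOp.exists_tendsto_pow_single (hw : ∀ n, 0 < w n) (hT : IsCesaroOp w w T)
    (hsum : Summable w) (j : ℕ) (a : ℂ) :
    ∃ y, Tendsto (fun m => (T ^ m) (lp.single 1 j a)) atTop (𝓝 y) := by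
  choose L hL using exists_tendsto_cesaroPow j
  refine lp.exists_tendsto_of_tendsto_apply_of_norm_le (b := fun n => ‖a‖ * (w n / w j))
    (f := fun n => a * ((w n / w j * L n : ℝ) : ℂ))
    ((hsum.div_const _).mul_left _) (fun m n => ?_) (fun n => ?_)
  · have hc := cesaroPow_mem_Icc m j
    have hwnj : 0 ≤ w n / w j := div_nonneg (hw n).le (hw j).le
    rw [hT.pow_single_apply fun n => (hw n).ne', norm_mul, Complex.norm_real,
      Real.norm_of_nonneg (mul_nonneg hwnj (hc.1 n))]
    exact mul_le_mul_of_nonneg_left (mul_le_of_le_one_right hwnj (hc.2 n)) (norm_nonneg a)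
  · simp_rw [hT.pow_single_apply fun n => (hw n).ne']
    exact tendsto_const_nhds.mul ((hL n).const_mul (w n / w j)).ofReal

lemma summable_of_tendsto_apply_of_norm_le {v : ℕ → ℝ} {F : ℕ → ellOne} {C : ℝ}
    (hC : ∀ᶠ k in atTop, ‖F k‖ ≤ C) (hF : ∀ n, Tendsto (fun k => F k n) atTop (𝓝 (v n : ℂ))) :
    Summable v := by
  have := (lp.memℓp_of_tendsto_of_eventually_norm_le hC hF).summable (by simp)
  simp only [ENNReal.toReal_one, Real.rpow_one, Complex.norm_real, Real.norm_eq_abs] at this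
  exact this.of_abs

lemma IsCesaroOp.tendsto_pow_single_zero_apply (hw : ∀ n, w n ≠ 0) (hT : IsCesaroOp w w T)
    (n : ℕ) :
    Tendsto (fun m => (T ^ m) (lp.single 1 0 1) n) atTop (𝓝 ((w n / w 0 : ℝ) : ℂ)) := by
  simp_rw [hT.pow_single_apply hw, one_mul]
  simpa using ((tendsto_cesaroPow_zero_right n).const_mul (w n / w 0)).ofReal

lemma IsCesaroOp.summable_of_powerBounded (hw : ∀ n, w n ≠ 0) (hT : IsCesaroOp w w T)
    (hPB : PowerBounded T) : Summable w := by
  obtain ⟨C, hC⟩ := hPB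
  refine (summable_div_const_iff (hw 0)).1
    (summable_of_tendsto_apply_of_norm_le (C := C) ?_ (hT.tendsto_pow_single_zero_apply hw))
  filter_upwards [eventually_ge_atTop 1] with m hm
  simpa [lp.norm_single] using (T ^ m).le_of_opNorm_le (hC m hm) (lp.single 1 0 1)

lemma IsCesaroOp.summable_of_cesaroBounded (hw : ∀ n, w n ≠ 0) (hT : IsCesaroOp w w T)
    (hCB : CesaroBounded T) : Summable w := by
  obtain ⟨C, hC⟩ := hCB
  refine (summable_div_const_iff (hw 0)).1 (summable_of_tendsto_apply_of_norm_le (C := C)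
    (F := fun N => ((N : ℂ)⁻¹ • ∑ m ∈ Icc 1 N, T ^ m) (lp.single 1 0 1)) ?_ fun n => ?_)
  · filter_upwards [eventually_ge_atTop 1] with N hN
    simpa [lp.norm_single] using ContinuousLinearMap.le_of_opNorm_le _ (hC N hN) (lp.single 1 0 1)
  · simp only [inv_smul_sum_pow_apply, lp.coeFn_smul, lp.coeFn_sum, Pi.smul_apply, Finset.sum_apply]
    exact (hT.tendsto_pow_single_zero_apply hw n).cesaro_smul_Icc

lemma IsCesaroOp.tendsto_pow_of_powerBounded (hw : ∀ n, 0 < w n) (hT : IsCesaroOp w w T)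
    (hPB : PowerBounded T) (x : ellOne) : ∃ y, Tendsto (fun m => (T ^ m) x) atTop (𝓝 y) :=
  let ⟨_, hC⟩ := hPB
  lp.exists_tendsto_of_forall_single ENNReal.one_ne_top (eventually_atTop.2 ⟨1, hC⟩)
    (hT.exists_tendsto_pow_single hw (hT.summable_of_powerBounded (fun n => (hw n).ne') hPB)) x

lemma IsCesaroOp.meanErgodic_of_cesaroBounded (hw : ∀ n, 0 < w n) (hT : IsCesaroOp w w T)
    (hCB : CesaroBounded T) : MeanErgodic T := by
  obtain ⟨C, hC⟩ := hCB
  have hsingle (j : ℕ) (a : ℂ) : ∃ y, Tendsto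
      (fun n : ℕ => ((n : ℂ)⁻¹ • ∑ m ∈ Icc 1 n, T ^ m) (lp.single 1 j a)) atTop (𝓝 y) :=
    let ⟨y, hy⟩ := hT.exists_tendsto_pow_single hw
      (hT.summable_of_cesaroBounded (fun n => (hw n).ne') ⟨C, hC⟩) j a
    ⟨y, by simpa only [inv_smul_sum_pow_apply] using hy.cesaro_smul_Icc⟩
  intro x
  simpa only [inv_smul_sum_pow_apply] using
    lp.exists_tendsto_of_forall_single ENNReal.one_ne_top (eventually_atTop.2 ⟨1, hC⟩) hsingle x

end CesaroOperator

theorem power_bounded_and_mean_ergodic_characterizations_general (w : ℕ → ℝ)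
    (hw : ∀ n, 0 < w n)
    (T : ellOne →L[ℂ] ellOne) (hT : IsCesaroOp w w T) :
    (PowerBounded T ↔
        ∀ x : ellOne, ∃ y : ellOne, Tendsto (fun m : ℕ => (T ^ m) x) atTop (nhds y)) ∧
      (PowerBounded T → ∀ x : ellOne, ∃ y : ellOne,
        Tendsto (fun m : ℕ => (T ^ m) x) atTop (nhds y) ∧ T y = y ∧
          x - y ∈ closure (Set.range fun z : ellOne => z - T z)) ∧
      (PowerBounded T → MeanErgodic T) ∧
      (MeanErgodic T ↔ CesaroBounded T) := by
  have tendsto_pow := hT.tendsto_pow_of_powerBounded hw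
  refine ⟨⟨tendsto_pow, PowerBounded.of_tendsto_pow⟩, fun hPB x => ?_, fun hPB x => ?_,
    ⟨MeanErgodic.cesaroBounded, hT.meanErgodic_of_cesaroBounded hw⟩⟩
  · obtain ⟨y, hy⟩ := tendsto_pow hPB x
    exact ⟨y, hy, T.apply_eq_self_of_tendsto_pow hy, T.sub_mem_closure_range_of_tendsto_pow hy⟩
  · obtain ⟨y, hy⟩ := tendsto_pow hPB x
    exact ⟨y, hy.cesaro_smul_Icc⟩

theorem power_bounded_and_mean_ergodic_characterizations (w : ℕ → ℝ)
    (hw : ∀ n, 0 < w n) (hwb : ∃ C, ∀ n, w n ≤ C)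
    (hM : Mvw w w ≠ ⊤)
    (T : ellOne →L[ℂ] ellOne) (hT : IsCesaroOp w w T) :
    (PowerBounded T ↔
        ∀ x : ellOne, ∃ y : ellOne, Tendsto (fun m : ℕ => (T ^ m) x) atTop (nhds y)) ∧
      (PowerBounded T → ∀ x : ellOne, ∃ y : ellOne,
        Tendsto (fun m : ℕ => (T ^ m) x) atTop (nhds y) ∧ T y = y ∧
          x - y ∈ closure (Set.range fun z : ellOne => z - T z)) ∧
      (PowerBounded T → MeanErgodic T) ∧
      (MeanErgodic T ↔ CesaroBounded T) :=
  power_bounded_and_mean_ergodic_characterizations_general w hw T hT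
end
end
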